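/- arXiv:2605.16095 — 8 statements merged into one kernel-verified Lean document; each statement's English description precedes it below -/
import Mathlib

section
/- Let f ∈ C¹([-1,0]) and ω > 0. Then ∫_{-1}^{0} (-z)^{2ω-1} f(z)² dz ≤ (1/ω) f(-1)² + (1/ω²) ∫_{-1}^{0} (-z)^{2ω+1} (f'(z))² dz. -/
/-!
Integrating `d/dz [-(-z)^{2ω} f(z)² / (2ω)] = (-z)^{2ω-1} f² - (1/ω) (-z)^{2ω} f f'` over
`[-1, 0]` expresses the left-hand side as `f(-1)²/(2ω)` plus the cross term
`(1/ω) ∫ (-z)^{2ω} f f'`; the boundary term at `0` vanishes because `2ω > 0`, so no limiting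
argument is needed even when the weight `(-z)^{2ω-1}` is singular. Young's inequality bounds the
cross term by half the left-hand side plus `(1/(2ω²)) ∫ (-z)^{2ω+1} f'²`, and the half is absorbed.
-/

open MeasureTheory Set intervalIntegral

lemma rpow_mul_mul_le_young {t : ℝ} (ht : 0 < t) (s : ℝ) {c : ℝ} (hc : 0 < c) (a b : ℝ) :
    t ^ s * (a * b) ≤ c / 2 * (t ^ (s - 1) * a ^ 2) + 1 / (2 * c) * (t ^ (s + 1) * b ^ 2) := by
  rw [Real.rpow_sub ht, Real.rpow_add ht, Real.rpow_one]
  have hsq : c / 2 * (t ^ s / t * a ^ 2) + 1 / (2 * c) * (t ^ s * t * b ^ 2) - t ^ s * (a * b)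
      = t ^ s / (2 * c * t) * (c * a - t * b) ^ 2 := by
    field_simp
    ring
  have : 0 ≤ t ^ s / (2 * c * t) * (c * a - t * b) ^ 2 := by positivity
  linarith

lemma hasDerivAt_neg_rpow {z : ℝ} (hz : z < 0) (p : ℝ) :
    HasDerivAt (fun z : ℝ => (-z) ^ p) (-(p * (-z) ^ (p - 1))) z := by
  refine ((Real.hasDerivAt_rpow_const (Or.inl (neg_ne_zero.mpr hz.ne))).comp z
    (hasDerivAt_neg z)).congr_deriv ?_
  ring

lemma intervalIntegrable_neg_rpow_mul {a r : ℝ} (ha : a ≤ 0) (hr : -1 < r) {g : ℝ → ℝ}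
    (hg : ContinuousOn g (Icc a 0)) :
    IntervalIntegrable (fun z => (-z) ^ r * g z) volume a 0 := by
  have hw : IntervalIntegrable (fun z : ℝ => (-z) ^ r) volume a 0 := by
    simpa using (IntervalIntegrable.iff_comp_neg (a := -a) (b := 0)).mp
      (intervalIntegrable_rpow' hr)
  exact hw.mul_continuousOn (by rwa [uIcc_of_le ha])

theorem integral_neg_rpow_sub_one_mul_sq {f f' : ℝ → ℝ} {a p : ℝ} (ha : a ≤ 0) (hp : 0 < p)
    (hf : ContinuousOn f (Icc a 0)) (hderiv : ∀ z ∈ Ioo a 0, HasDerivAt f (f' z) z)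
    (hf' : ContinuousOn f' (Icc a 0)) :
    ∫ z in a..0, (-z) ^ (p - 1) * f z ^ 2 =
      (-a) ^ p * f a ^ 2 / p + 2 / p * ∫ z in a..0, (-z) ^ p * (f z * f' z) := by
  have hG : ∀ z ∈ Ioo a 0, HasDerivAt (fun z => -((-z) ^ p * f z ^ 2) / p)
      ((-z) ^ (p - 1) * f z ^ 2 - 2 / p * ((-z) ^ p * (f z * f' z))) z := by
    intro z hz
    refine (((hasDerivAt_neg_rpow hz.2 p).fun_mul ((hderiv z hz).fun_pow 2)).fun_neg.div_const
      p).congr_deriv ?_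
    field_simp
    ring
  have hGcont : ContinuousOn (fun z => -((-z) ^ p * f z ^ 2) / p) (Icc a 0) :=
    ((continuous_neg.continuousOn.rpow_const fun _ _ => Or.inr hp.le).mul
      (hf.pow 2)).neg.div_const p
  have hI : IntervalIntegrable (fun z => (-z) ^ (p - 1) * f z ^ 2) volume a 0 :=
    intervalIntegrable_neg_rpow_mul ha (by linarith) (hf.pow 2)
  have hM : IntervalIntegrable (fun z => (-z) ^ p * (f z * f' z)) volume a 0 :=
    intervalIntegrable_neg_rpow_mul ha (by linarith) (hf.mul hf')
  have hftc := integral_eq_sub_of_hasDerivAt_of_le ha hGcont hG (hI.sub (hM.const_mul _))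
  rw [integral_sub hI (hM.const_mul _), intervalIntegral.integral_const_mul] at hftc
  simp only [neg_zero, Real.zero_rpow hp.ne', zero_mul, neg_div, sub_neg_eq_add, zero_div,
    zero_add] at hftc
  linarith

lemma integral_neg_rpow_mul_mul_le {f g : ℝ → ℝ} {a s c : ℝ} (ha : a ≤ 0) (hs : 0 < s)
    (hc : 0 < c) (hf : ContinuousOn f (Icc a 0)) (hg : ContinuousOn g (Icc a 0)) :
    ∫ z in a..0, (-z) ^ s * (f z * g z) ≤
      c / 2 * (∫ z in a..0, (-z) ^ (s - 1) * f z ^ 2) +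
        1 / (2 * c) * ∫ z in a..0, (-z) ^ (s + 1) * g z ^ 2 := by
  have hI : IntervalIntegrable (fun z => (-z) ^ (s - 1) * f z ^ 2) volume a 0 :=
    intervalIntegrable_neg_rpow_mul ha (by linarith) (hf.pow 2)
  have hJ : IntervalIntegrable (fun z => (-z) ^ (s + 1) * g z ^ 2) volume a 0 :=
    intervalIntegrable_neg_rpow_mul ha (by linarith) (hg.pow 2)
  have h := integral_mono_on_of_le_Ioo ha
    (intervalIntegrable_neg_rpow_mul ha (by linarith) (hf.mul hg))
    ((hI.const_mul _).add (hJ.const_mul _))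
    fun z hz => rpow_mul_mul_le_young (neg_pos.mpr hz.2) s hc (f z) (g z)
  rw [integral_add (hI.const_mul _) (hJ.const_mul _), intervalIntegral.integral_const_mul,
    intervalIntegral.integral_const_mul] at h
  exact h

/-- For `f ∈ C¹([-1,0])` and `ω > 0`,
`∫_{-1}^{0} (-z)^{2ω-1} f(z)² dz ≤ (1/ω) f(-1)² + (1/ω²) ∫_{-1}^{0} (-z)^{2ω+1} (f'(z))² dz`. -/
theorem stmt_0 (f f' : ℝ → ℝ) (ω : ℝ) (hω : 0 < ω)
    (hderiv : ∀ z ∈ Set.Icc (-1:ℝ) 0, HasDerivWithinAt f (f' z) (Set.Icc (-1:ℝ) 0) z)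
    (hcont : ContinuousOn f' (Set.Icc (-1:ℝ) 0)) :
    ∫ z in (-1:ℝ)..0, (-z) ^ (2*ω - 1) * (f z)^2 ≤
      (1/ω) * (f (-1))^2 + (1/ω^2) * ∫ z in (-1:ℝ)..0, (-z) ^ (2*ω + 1) * (f' z)^2 := by
  have hf : ContinuousOn f (Icc (-1) 0) := fun z hz => (hderiv z hz).continuousWithinAt
  have hderiv' : ∀ z ∈ Ioo (-1 : ℝ) 0, HasDerivAt f (f' z) z := fun z hz =>
    (hderiv z (Ioo_subset_Icc_self hz)).hasDerivAt (Icc_mem_nhds hz.1 hz.2)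
  have hparts := integral_neg_rpow_sub_one_mul_sq (p := 2 * ω) (by norm_num) (by positivity)
    hf hderiv' hcont
  have hcross := integral_neg_rpow_mul_mul_le (s := 2 * ω) (by norm_num) (by positivity) hω
    hf hcont
  rw [neg_neg, Real.one_rpow, one_mul] at hparts
  set I := ∫ z in (-1:ℝ)..0, (-z) ^ (2*ω - 1) * (f z)^2
  set J := ∫ z in (-1:ℝ)..0, (-z) ^ (2*ω + 1) * (f' z)^2
  have habsorb : I ≤ (1/ω) * (f (-1))^2 / 2 + I / 2 + (1/ω^2) * J / 2 := calc
    I = f (-1) ^ 2 / (2 * ω) + 2 / (2 * ω) * ∫ z in (-1:ℝ)..0, (-z) ^ (2*ω) * (f z * f' z) :=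
      hparts
    _ ≤ f (-1) ^ 2 / (2 * ω) + 2 / (2 * ω) * (ω / 2 * I + 1 / (2 * ω) * J) := by gcongr
    _ = (1/ω) * (f (-1))^2 / 2 + I / 2 + (1/ω^2) * J / 2 := by field_simp; ring
  linarith
end

section
/- Let f ∈ C¹([-1,0]) with f(-1) = 0 and ω > 0. Then the weighted Hardy inequality ∫_{-1}^{0} (-z)^{2ω-1} f(z)²/(z+1)² dz ≤ C(ω) ∫_{-1}^{0} (-z)^{2ω+1} (f'(z))² dz holds with constant C(ω) = 4/ω² + 2^{2ω+4}. -/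
/-!
Put `p = 2ω`, `A = (-z)^(p-1) f² / (z+1)²`, `B = (-z)^(p+1) f'²` and `C = (-z)^p f f' / (z+1)`,
so that `C² = A B`. The energy `(-z)^p f² / (z+1)` vanishes at both ends of `[-1, 0]` (at `-1`
because `f(-1) = 0` makes `f² / (z+1) = (z+1) · slope²` tend to `0`), and its derivative is
`2C - w A` with `w = p (z+1) - z ≥ m := min 1 p`. Integrating gives `∫ w A = 2 ∫ C`, and AM-GM,
`2C ≤ (m/2) A + (2/m) B`, absorbs half of `m ∫ A`: `∫ A ≤ (4/m²) ∫ B`. Finally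
`4/m² ≤ max 4 (1/ω²) ≤ 4/ω² + 2^(2ω+4)`.
-/

open Set MeasureTheory Filter Topology

theorem two_mul_le_of_sq_le_mul {a b c m : ℝ} (hm : 0 < m) (ha : 0 ≤ a) (hb : 0 ≤ b)
    (h : c ^ 2 ≤ a * b) : 2 * c ≤ m / 2 * a + 2 / m * b := by
  have hsq : (m / 2 * a + 2 / m * b) ^ 2 = (m / 2 * a - 2 / m * b) ^ 2 + 4 * (a * b) := by
    field_simp
    ring
  refine (abs_le_of_sq_le_sq' ?_ (by positivity)).2
  nlinarith [sq_nonneg (m / 2 * a - 2 / m * b)]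

theorem MeasureTheory.Integrable.of_sq_le_mul {α : Type*} [MeasurableSpace α] {μ : Measure α}
    {A B C : α → ℝ} (hA : Integrable A μ) (hB : Integrable B μ) (hC : AEStronglyMeasurable C μ)
    (hA0 : ∀ᵐ x ∂μ, 0 ≤ A x) (hB0 : ∀ᵐ x ∂μ, 0 ≤ B x)
    (hCAB : ∀ᵐ x ∂μ, C x ^ 2 ≤ A x * B x) : Integrable C μ := by
  refine ((hA.add hB).div_const 2).mono' hC ?_
  filter_upwards [hA0, hB0, hCAB] with x ha hb h
  have hpos := two_mul_le_of_sq_le_mul two_pos ha hb h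
  have hneg := two_mul_le_of_sq_le_mul two_pos ha hb (by rwa [neg_sq])
  rw [Real.norm_eq_abs, abs_le, Pi.add_apply]
  constructor <;> linarith

theorem integral_le_of_integral_mul_eq_two_mul_integral {α : Type*} [MeasurableSpace α]
    {μ : Measure α} {A B C w : α → ℝ} {m : ℝ} (hm : 0 < m)
    (hA : Integrable A μ) (hB : Integrable B μ) (hC : Integrable C μ)
    (hwA : Integrable (fun x => w x * A x) μ)
    (hA0 : ∀ᵐ x ∂μ, 0 ≤ A x) (hB0 : ∀ᵐ x ∂μ, 0 ≤ B x)
    (hCAB : ∀ᵐ x ∂μ, C x ^ 2 ≤ A x * B x) (hw : ∀ᵐ x ∂μ, m ≤ w x)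
    (heq : ∫ x, w x * A x ∂μ = 2 * ∫ x, C x ∂μ) :
    ∫ x, A x ∂μ ≤ 4 / m ^ 2 * ∫ x, B x ∂μ := by
  have lower : m * ∫ x, A x ∂μ ≤ ∫ x, w x * A x ∂μ := by
    rw [← integral_const_mul]
    refine integral_mono_ae (hA.const_mul m) hwA ?_
    filter_upwards [hA0, hw] with x ha hx
    exact mul_le_mul_of_nonneg_right hx ha
  have upper : 2 * ∫ x, C x ∂μ ≤ m / 2 * ∫ x, A x ∂μ + 2 / m * ∫ x, B x ∂μ := by
    rw [← integral_const_mul, ← integral_const_mul, ← integral_const_mul,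
      ← integral_add (hA.const_mul _) (hB.const_mul _)]
    refine integral_mono_ae (hC.const_mul 2) ((hA.const_mul _).add (hB.const_mul _)) ?_
    filter_upwards [hA0, hB0, hCAB] with x ha hb h
    exact two_mul_le_of_sq_le_mul hm ha hb h
  calc ∫ x, A x ∂μ = 2 / m * (m / 2 * ∫ x, A x ∂μ) := by field_simp
    _ ≤ 2 / m * (2 / m * ∫ x, B x ∂μ) := mul_le_mul_of_nonneg_left (by linarith) (by positivity)
    _ = 4 / m ^ 2 * ∫ x, B x ∂μ := by ring

theorem HasDerivWithinAt.continuousWithinAt_sq_div_sub {f : ℝ → ℝ} {s : Set ℝ} {a d : ℝ}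
    (hf : HasDerivWithinAt f d s a) (ha : f a = 0) :
    ContinuousWithinAt (fun z => f z ^ 2 / (z - a)) s a := by
  rw [← continuousWithinAt_sdiff_self, ContinuousWithinAt, ha, sq, zero_mul, zero_div]
  have hsub : Tendsto (fun z => z - a) (𝓝[s \ {a}] a) (𝓝 0) :=
    tendsto_nhdsWithin_of_tendsto_nhds (by simpa using (continuous_sub_right a).tendsto a)
  have hslope := hasDerivWithinAt_iff_tendsto_slope.mp hf
  have hlim : Tendsto (fun z => (z - a) * slope f a z ^ 2) (𝓝[s \ {a}] a) (𝓝 0) := by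
    simpa using hsub.mul (hslope.pow 2)
  refine hlim.congr' ?_
  filter_upwards [self_mem_nhdsWithin] with z hz
  have hza : z - a ≠ 0 := sub_ne_zero.mpr hz.2
  rw [slope_def_field, ha, sub_zero]
  field_simp

theorem abs_le_mul_sub_of_hasDerivWithinAt {f f' : ℝ → ℝ} {a b K z : ℝ}
    (hderiv : ∀ x ∈ Icc a b, HasDerivWithinAt f (f' x) (Icc a b) x) (hK : ∀ x ∈ Icc a b, ‖f' x‖ ≤ K)
    (ha : f a = 0) (hz : z ∈ Icc a b) : |f z| ≤ K * (z - a) := by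
  have := (convex_Icc a b).norm_image_sub_le_of_norm_hasDerivWithin_le hderiv hK
    (left_mem_Icc.2 (hz.1.trans hz.2)) hz
  rwa [ha, sub_zero, Real.norm_eq_abs, Real.norm_eq_abs, abs_of_nonneg (sub_nonneg.2 hz.1)] at this

theorem sq_rpow_mul_div {x y a b p : ℝ} (hx : 0 < x) :
    (x ^ p * (a * b) / y) ^ 2 = x ^ (p - 1) * a ^ 2 / y ^ 2 * (x ^ (p + 1) * b ^ 2) := by
  have hpow : (x ^ p) ^ 2 = x ^ (p - 1) * x ^ (p + 1) := by
    rw [sq, ← Real.rpow_add hx, ← Real.rpow_add hx]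
    ring_nf
  rw [div_pow, mul_pow, hpow]
  ring

section Hardy

variable {f : ℝ → ℝ} {p : ℝ}

theorem continuousOn_neg_rpow_mul_sq_div {d : ℝ} (hp : 0 ≤ p) (hf : ContinuousOn f (Icc (-1) 0))
    (hd : HasDerivWithinAt f d (Icc (-1) 0) (-1)) (hbc : f (-1) = 0) :
    ContinuousOn (fun z => (-z) ^ p * f z ^ 2 / (z + 1)) (Icc (-1) 0) := by
  have hq : ContinuousOn (fun z => f z ^ 2 / (z - -1)) (Icc (-1) 0) := by
    intro z hz
    rcases hz.1.eq_or_lt with rfl | hz1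
    · exact hd.continuousWithinAt_sq_div_sub hbc
    · exact ((hf z hz).pow 2).div (continuousWithinAt_id.sub continuousWithinAt_const)
        (sub_ne_zero.mpr hz1.ne')
  simp only [mul_div_assoc, ← sub_neg_eq_add]
  exact (continuous_neg.rpow_const fun _ => Or.inr hp).continuousOn.mul hq

theorem hasDerivAt_neg_rpow_mul_sq_div {z d : ℝ} (hz : z < 0) (hz1 : z + 1 ≠ 0)
    (hf : HasDerivAt f d z) :
    HasDerivAt (fun z => (-z) ^ p * f z ^ 2 / (z + 1))
      (2 * ((-z) ^ p * (f z * d) / (z + 1))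
        - (p * (z + 1) - z) * ((-z) ^ (p - 1) * f z ^ 2 / (z + 1) ^ 2)) z := by
  have hx : 0 < -z := neg_pos.mpr hz
  have hrpow : HasDerivAt (fun z : ℝ => (-z) ^ p) (p * (-z) ^ (p - 1) * -1) z :=
    (Real.hasDerivAt_rpow_const (Or.inl hx.ne')).comp z (hasDerivAt_neg z)
  refine ((hrpow.fun_mul (hf.fun_pow 2)).fun_div ((hasDerivAt_id z).add_const 1) hz1).congr_deriv ?_
  have hsplit : (-z) ^ p = (-z) ^ (p - 1) * (-z) := by
    rw [← Real.rpow_add_one hx.ne', sub_add_cancel]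
  rw [hsplit, id]
  field_simp
  ring

theorem integrableOn_neg_rpow_Ioo {s : ℝ} (hs : -1 < s) :
    IntegrableOn (fun z : ℝ => (-z) ^ s) (Ioo (-1) 0) := by
  have h := (IntervalIntegrable.iff_comp_neg (a := 0) (b := 1)).mp
    (intervalIntegral.intervalIntegrable_rpow' hs)
  rwa [neg_zero, IntervalIntegrable.symm_iff,
    intervalIntegrable_iff_integrableOn_Ioo_of_le (by norm_num)] at h

theorem integrableOn_neg_rpow_mul_sq_div_sq {s K : ℝ} (hs : -1 < s)
    (hf : ContinuousOn f (Ioo (-1) 0)) (hK : ∀ z ∈ Ioo (-1 : ℝ) 0, |f z| ≤ K * (z + 1)) :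
    IntegrableOn (fun z => (-z) ^ s * f z ^ 2 / (z + 1) ^ 2) (Ioo (-1) 0) := by
  have hcont : ContinuousOn (fun z => (-z) ^ s * f z ^ 2 / (z + 1) ^ 2) (Ioo (-1) 0) :=
    ((continuousOn_neg.rpow_const fun z hz => Or.inl (neg_ne_zero.mpr hz.2.ne)).mul
      (hf.pow 2)).div (by fun_prop) fun z hz => by nlinarith [hz.1]
  refine ((integrableOn_neg_rpow_Ioo hs).const_mul (K ^ 2)).mono'
    (hcont.aestronglyMeasurable measurableSet_Ioo) ?_
  filter_upwards [ae_restrict_mem measurableSet_Ioo] with z hz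
  have hsq : f z ^ 2 ≤ (K * (z + 1)) ^ 2 := by
    rw [← sq_abs]
    exact pow_le_pow_left₀ (abs_nonneg _) (hK z hz) 2
  have hpow : 0 ≤ (-z) ^ s := Real.rpow_nonneg (by linarith [hz.2]) _
  have hz1 : 0 < z + 1 := by linarith [hz.1]
  rw [Real.norm_eq_abs, abs_of_nonneg (by positivity), div_le_iff₀ (by positivity)]
  calc (-z) ^ s * f z ^ 2 ≤ (-z) ^ s * (K * (z + 1)) ^ 2 := mul_le_mul_of_nonneg_left hsq hpow
    _ = K ^ 2 * (-z) ^ s * (z + 1) ^ 2 := by ring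

theorem integral_weight_mul_eq_two_mul_integral {f' : ℝ → ℝ} (hp : 0 < p)
    (hderiv : ∀ z ∈ Icc (-1 : ℝ) 0, HasDerivWithinAt f (f' z) (Icc (-1) 0) z) (hbc : f (-1) = 0)
    (hC : IntegrableOn (fun z => (-z) ^ p * (f z * f' z) / (z + 1)) (Ioo (-1) 0))
    (hwA : IntegrableOn (fun z => (p * (z + 1) - z) * ((-z) ^ (p - 1) * f z ^ 2 / (z + 1) ^ 2))
      (Ioo (-1) 0)) :
    ∫ z in Ioo (-1) 0, (p * (z + 1) - z) * ((-z) ^ (p - 1) * f z ^ 2 / (z + 1) ^ 2) =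
      2 * ∫ z in Ioo (-1) 0, (-z) ^ p * (f z * f' z) / (z + 1) := by
  have hftc := intervalIntegral.integral_eq_sub_of_hasDeriv_right_of_le (by norm_num)
    (continuousOn_neg_rpow_mul_sq_div hp.le (fun z hz => (hderiv z hz).continuousWithinAt)
      (hderiv (-1) (by norm_num)) hbc)
    (fun z hz => (hasDerivAt_neg_rpow_mul_sq_div hz.2 (by linarith [hz.1])
      ((hderiv z (Ioo_subset_Icc_self hz)).hasDerivAt (Icc_mem_nhds hz.1 hz.2))).hasDerivWithinAt)
    ((intervalIntegrable_iff_integrableOn_Ioo_of_le (by norm_num)).mpr ((hC.const_mul 2).sub hwA))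
  rw [intervalIntegral.integral_of_le (by norm_num), integral_Ioc_eq_integral_Ioo,
    integral_sub (hC.const_mul 2) hwA, integral_const_mul] at hftc
  norm_num [hbc, Real.zero_rpow hp.ne'] at hftc
  linarith

theorem integral_neg_rpow_mul_sq_div_sq_le {f' : ℝ → ℝ} (hp : 0 < p)
    (hderiv : ∀ z ∈ Icc (-1 : ℝ) 0, HasDerivWithinAt f (f' z) (Icc (-1) 0) z)
    (hcont : ContinuousOn f' (Icc (-1) 0)) (hbc : f (-1) = 0) :
    ∫ z in Ioo (-1) 0, (-z) ^ (p - 1) * f z ^ 2 / (z + 1) ^ 2 ≤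
      4 / min 1 p ^ 2 * ∫ z in Ioo (-1) 0, (-z) ^ (p + 1) * f' z ^ 2 := by
  have hf : ContinuousOn f (Icc (-1) 0) := fun z hz => (hderiv z hz).continuousWithinAt
  obtain ⟨K, hK⟩ := isCompact_Icc.exists_bound_of_continuousOn hcont
  have hA := integrableOn_neg_rpow_mul_sq_div_sq (by linarith : -1 < p - 1)
    (hf.mono Ioo_subset_Icc_self) (K := K) fun z hz => by
      simpa using abs_le_mul_sub_of_hasDerivWithinAt hderiv hK hbc (Ioo_subset_Icc_self hz)
  have hB : IntegrableOn (fun z => (-z) ^ (p + 1) * f' z ^ 2) (Ioo (-1) 0) :=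
    ((continuous_neg.rpow_const fun _ => Or.inr (by positivity)).continuousOn.mul
      (hcont.pow 2)).integrableOn_Icc.mono_set Ioo_subset_Icc_self
  have hA0 : ∀ᵐ z ∂volume.restrict (Ioo (-1 : ℝ) 0), 0 ≤ (-z) ^ (p - 1) * f z ^ 2 / (z + 1) ^ 2 :=
    ae_restrict_of_forall_mem measurableSet_Ioo fun z hz =>
      div_nonneg (mul_nonneg (Real.rpow_nonneg (by linarith [hz.2]) _) (sq_nonneg _)) (sq_nonneg _)
  have hB0 : ∀ᵐ z ∂volume.restrict (Ioo (-1 : ℝ) 0), 0 ≤ (-z) ^ (p + 1) * f' z ^ 2 :=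
    ae_restrict_of_forall_mem measurableSet_Ioo fun z hz =>
      mul_nonneg (Real.rpow_nonneg (by linarith [hz.2]) _) (sq_nonneg _)
  have hCAB : ∀ᵐ z ∂volume.restrict (Ioo (-1 : ℝ) 0), ((-z) ^ p * (f z * f' z) / (z + 1)) ^ 2 ≤
      (-z) ^ (p - 1) * f z ^ 2 / (z + 1) ^ 2 * ((-z) ^ (p + 1) * f' z ^ 2) :=
    ae_restrict_of_forall_mem measurableSet_Ioo fun z hz => (sq_rpow_mul_div (neg_pos.mpr hz.2)).le
  have hC : IntegrableOn (fun z => (-z) ^ p * (f z * f' z) / (z + 1)) (Ioo (-1) 0) := by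
    refine Integrable.of_sq_le_mul hA hB (ContinuousOn.aestronglyMeasurable ?_ measurableSet_Ioo)
      hA0 hB0 hCAB
    exact ((continuous_neg.rpow_const fun _ => Or.inr hp.le).continuousOn.mul
      ((hf.mul hcont).mono Ioo_subset_Icc_self)).div (by fun_prop)
      fun z hz => by linarith [hz.1]
  have hwA : IntegrableOn (fun z => (p * (z + 1) - z) * ((-z) ^ (p - 1) * f z ^ 2 / (z + 1) ^ 2))
      (Ioo (-1) 0) :=
    ((integrableOn_Icc_iff_integrableOn_Ioo).mpr hA).continuousOn_mul (by fun_prop)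
      isCompact_Icc |>.mono_set Ioo_subset_Icc_self
  have hw : ∀ᵐ z ∂volume.restrict (Ioo (-1 : ℝ) 0), min 1 p ≤ p * (z + 1) - z :=
    ae_restrict_of_forall_mem measurableSet_Ioo fun z hz => by
      nlinarith [mul_nonneg (sub_nonneg.2 (min_le_right 1 p)) (show 0 ≤ z + 1 by linarith [hz.1]),
        mul_nonneg (sub_nonneg.2 (min_le_left 1 p)) (show 0 ≤ -z by linarith [hz.2])]
  exact integral_le_of_integral_mul_eq_two_mul_integral (lt_min one_pos hp) hA hB hC hwA
    hA0 hB0 hCAB hw (integral_weight_mul_eq_two_mul_integral hp hderiv hbc hC hwA)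

end Hardy

theorem four_div_sq_min_le {ω : ℝ} (hω : 0 < ω) :
    4 / min 1 (2 * ω) ^ 2 ≤ 4 / ω ^ 2 + 2 ^ (2 * ω + 4) := by
  have h16 : (16 : ℝ) ≤ 2 ^ (2 * ω + 4) :=
    calc (16 : ℝ) = 2 ^ (4 : ℝ) := by norm_num
      _ ≤ 2 ^ (2 * ω + 4) := Real.rpow_le_rpow_of_exponent_le (by norm_num) (by linarith)
  have hω2 : 0 < 4 / ω ^ 2 := by positivity
  rcases le_total 1 (2 * ω) with h | h
  · rw [min_eq_left h]
    linarith
  · have : 4 / (2 * ω) ^ 2 ≤ 4 / ω ^ 2 := by gcongr; linarith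
    rw [min_eq_right h]
    linarith

/-- Weighted Hardy inequality: for `f ∈ C¹([-1,0])` with `f(-1) = 0` and `ω > 0`,
`∫_{-1}^{0} (-z)^{2ω-1} f(z)²/(z+1)² dz ≤ C(ω) ∫_{-1}^{0} (-z)^{2ω+1} (f'(z))² dz`
with `C(ω) = 4/ω² + 2^{2ω+4}`. -/
theorem stmt_2 (f f' : ℝ → ℝ) (ω : ℝ) (hω : 0 < ω)
    (hderiv : ∀ z ∈ Set.Icc (-1:ℝ) 0, HasDerivWithinAt f (f' z) (Set.Icc (-1:ℝ) 0) z)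
    (hcont : ContinuousOn f' (Set.Icc (-1:ℝ) 0))
    (hbc : f (-1) = 0) :
    ∫ z in (-1:ℝ)..0, (-z) ^ (2*ω - 1) * (f z)^2 / (z + 1)^2 ≤
      (4/ω^2 + (2:ℝ) ^ (2*ω + 4)) * ∫ z in (-1:ℝ)..0, (-z) ^ (2*ω + 1) * (f' z)^2 := by
  simp only [intervalIntegral.integral_of_le (show (-1 : ℝ) ≤ 0 by norm_num),
    integral_Ioc_eq_integral_Ioo]
  have hB0 : 0 ≤ ∫ z in Ioo (-1) 0, (-z) ^ (2 * ω + 1) * f' z ^ 2 :=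
    setIntegral_nonneg measurableSet_Ioo fun z hz =>
      mul_nonneg (Real.rpow_nonneg (by linarith [hz.2]) _) (sq_nonneg _)
  calc _ ≤ 4 / min 1 (2 * ω) ^ 2 * ∫ z in Ioo (-1) 0, (-z) ^ (2 * ω + 1) * f' z ^ 2 :=
        integral_neg_rpow_mul_sq_div_sq_le (by positivity) hderiv hcont hbc
    _ ≤ _ := mul_le_mul_of_nonneg_right (four_div_sq_min_le hω) hB0
end

section
/- Let f ∈ C²([-1,0]) with f(-1) = 0. Then for all z ∈ (-1,0], |d/dz ( f(z)/(z+1) )| ≤ (z+1)^{-1} ∫_{-1}^{z} |f''(z')| dz'. -/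
/-! By the mean value theorem and `f a = 0`, `f b = f' c * (b - a)` for some `c ∈ (a, b)`, so
`f' b / (b - a) - f b / (b - a) ^ 2 = (f' b - f' c) / (b - a)`, and `|f' b - f' c|` is at most
the integral of `|f''|` over `[c, b] ⊆ [a, b]`. -/

open Set MeasureTheory intervalIntegral

theorem hasDerivAt_of_forall_hasDerivWithinAt_Icc {f f' : ℝ → ℝ} {a b x : ℝ}
    (hf : ∀ y ∈ Icc a b, HasDerivWithinAt f (f' y) (Icc a b) y) (hx : x ∈ Ioo a b) :
    HasDerivAt f (f' x) x :=
  (hf x (Ioo_subset_Icc_self hx)).hasDerivAt (Icc_mem_nhds hx.1 hx.2)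

theorem exists_mem_Ioo_eq_mul_sub_of_eq_zero {f f' : ℝ → ℝ} {a b : ℝ} (hab : a < b)
    (hf : ∀ x ∈ Icc a b, HasDerivWithinAt f (f' x) (Icc a b) x) (ha : f a = 0) :
    ∃ c ∈ Ioo a b, f b = f' c * (b - a) := by
  obtain ⟨c, hc, hslope⟩ := exists_hasDerivAt_eq_slope f f' hab
    (fun x hx => (hf x hx).continuousWithinAt)
    (fun x hx => hasDerivAt_of_forall_hasDerivWithinAt_Icc hf hx)
  refine ⟨c, hc, ?_⟩
  rw [hslope, ha, sub_zero, div_mul_cancel₀ _ (sub_pos.2 hab).ne']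

theorem abs_sub_le_integral_abs_of_hasDerivWithinAt {g g' : ℝ → ℝ} {a b : ℝ} (hab : a ≤ b)
    (hg : ∀ x ∈ Icc a b, HasDerivWithinAt g (g' x) (Icc a b) x)
    (hg' : IntervalIntegrable g' volume a b) :
    |g b - g a| ≤ ∫ x in a..b, |g' x| := by
  rw [← integral_eq_sub_of_hasDeriv_right_of_le hab (fun x hx => (hg x hx).continuousWithinAt)
    (fun x hx => (hasDerivAt_of_forall_hasDerivWithinAt_Icc hg hx).hasDerivWithinAt) hg']
  exact abs_integral_le_integral_abs hab

theorem abs_deriv_div_sub_le_integral_abs {f f' f'' : ℝ → ℝ} {a b : ℝ} (hab : a < b)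
    (hf : ∀ x ∈ Icc a b, HasDerivWithinAt f (f' x) (Icc a b) x)
    (hf' : ∀ x ∈ Icc a b, HasDerivWithinAt f' (f'' x) (Icc a b) x)
    (hf'' : ContinuousOn f'' (Icc a b)) (ha : f a = 0) :
    |f' b / (b - a) - f b / (b - a) ^ 2| ≤ (b - a)⁻¹ * ∫ x in a..b, |f'' x| := by
  have hba : 0 < b - a := sub_pos.2 hab
  obtain ⟨c, hc, hfb⟩ := exists_mem_Ioo_eq_mul_sub_of_eq_zero hab hf ha
  have hcb : Icc c b ⊆ Icc a b := Icc_subset_Icc_left hc.1.le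
  have hdiff : |f' b - f' c| ≤ ∫ x in a..b, |f'' x| :=
    calc |f' b - f' c| ≤ ∫ x in c..b, |f'' x| :=
          abs_sub_le_integral_abs_of_hasDerivWithinAt hc.2.le
            (fun x hx => (hf' x (hcb hx)).mono hcb)
            ((hf''.mono hcb).intervalIntegrable_of_Icc hc.2.le)
      _ ≤ ∫ x in a..b, |f'' x| :=
          integral_mono_interval hc.1.le hc.2.le le_rfl
            (Filter.Eventually.of_forall fun x => abs_nonneg (f'' x))
            (hf''.abs.intervalIntegrable_of_Icc hab.le)
  have hsimp : f' b / (b - a) - f b / (b - a) ^ 2 = (b - a)⁻¹ * (f' b - f' c) := by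
    rw [hfb]
    field_simp
  rw [hsimp, abs_mul, abs_inv, abs_of_pos hba]
  gcongr

/-- For `f ∈ C²([-1,0])` with `f(-1) = 0`, for all `z ∈ (-1,0]`,
`|d/dz ( f(z)/(z+1) )| ≤ (z+1)⁻¹ ∫_{-1}^{z} |f''(z')| dz'`.
(The derivative of `f(z)/(z+1)` is `f'(z)/(z+1) - f(z)/(z+1)²`.) -/
theorem stmt_4 (f f' f'' : ℝ → ℝ)
    (hd1 : ∀ z ∈ Set.Icc (-1:ℝ) 0, HasDerivWithinAt f (f' z) (Set.Icc (-1:ℝ) 0) z)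
    (hd2 : ∀ z ∈ Set.Icc (-1:ℝ) 0, HasDerivWithinAt f' (f'' z) (Set.Icc (-1:ℝ) 0) z)
    (hcont : ContinuousOn f'' (Set.Icc (-1:ℝ) 0))
    (hbc : f (-1) = 0) :
    ∀ z ∈ Set.Ioc (-1:ℝ) 0,
      |f' z / (z + 1) - f z / (z + 1)^2| ≤ (z + 1)⁻¹ * ∫ w in (-1:ℝ)..z, |f'' w| := by
  intro z hz
  have hsub : Icc (-1 : ℝ) z ⊆ Icc (-1) 0 := Icc_subset_Icc_right hz.2
  simpa only [sub_neg_eq_add] using abs_deriv_div_sub_le_integral_abs hz.1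
    (fun x hx => (hd1 x (hsub hx)).mono hsub) (fun x hx => (hd2 x (hsub hx)).mono hsub)
    (hcont.mono hsub) hbc
end

section
/- Let α ∈ (1,2), δ ∈ (0,1), and f : [-1,0] → ℝ with f ∈ C^N away from 0, f ∈ C¹ on [-1,0], and such that for 2 ≤ j ≤ N, the function z ↦ |z|^{j-α} f^{(j)}(z) extends to a δ-Hölder continuous function on [-1,0]. Then there exist a unique constant c₀ and, for each δ' ∈ (0,δ), a function f₁ with the analogous property for exponent α+δ' (and continuity in place of Hölder continuity), such that f(z) = c₀ |z|^α + f₁(z). -/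
/-!
Write `a_j` for the limit at `0⁻` of the weighted derivative `|z|^(j-α) f⁽ʲ⁾(z)`, which exists
because it extends continuously to `[-1,0]`. These limits obey `a_{j+1} = (j - α) a_j`: for
`g = |z|^(j-α) f⁽ʲ⁾` one has `z g'(z) → (j - α) a_j - a_{j+1}`, and a nonzero limit there is
impossible for a function with a limit at `0⁻`, since Cauchy's mean value theorem against `log`
on `[x, x/2]` writes `g (x/2) - g x` as `-log 2` times a value of `z g'(z)`.
The weighted derivatives of `|z|^α` are constants `K_j` obeying the same recursion, so with
`c₀ = a_2 / (α (α - 1))` every `a_j` equals `c₀ K_j`. Then the weighted derivatives of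
`f₁ = f - c₀ |z|^α` for the exponent `α + δ'` are `|z|^(-δ') (g_j(z) - g_j(0))`, continuous at `0`
by the `δ`-Hölder bound on `g_j` since `δ' < δ`. Conversely every decomposition
`f = c |z|^α + f₁` forces `a_2 = c K_2`, which gives uniqueness.
-/

open Set

/-- Membership in the localized space `C_N^{α}` on `[-1,0]` (continuity version, i.e. `δ = 0`):
`f ∈ C^N` away from `0`, `f ∈ C¹` on `[-1,0]`, and for `2 ≤ j ≤ N` the function
`z ↦ |z|^{j-α} f^{(j)}(z)` extends continuously to `[-1,0]`. -/
def MemLocC (N : ℕ) (α : ℝ) (f : ℝ → ℝ) : Prop :=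
  ContDiffOn ℝ N f (Set.Icc (-1:ℝ) 0 \ {0}) ∧
  ContDiffOn ℝ 1 f (Set.Icc (-1:ℝ) 0) ∧
  ∀ j : ℕ, 2 ≤ j → j ≤ N →
    ∃ g : ℝ → ℝ, ContinuousOn g (Set.Icc (-1:ℝ) 0) ∧
      ∀ z ∈ Set.Icc (-1:ℝ) 0 \ {0},
        g z = |z| ^ ((j : ℝ) - α) * iteratedDerivWithin j f (Set.Icc (-1:ℝ) 0 \ {0}) z

/-- Membership in the localized Hölder space `C_N^{α,δ}` on `[-1,0]`:
`f ∈ C^N` away from `0`, `f ∈ C¹` on `[-1,0]`, and for `2 ≤ j ≤ N` the function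
`z ↦ |z|^{j-α} f^{(j)}(z)` extends to a `δ`-Hölder continuous function on `[-1,0]`. -/
def MemLocHolder (N : ℕ) (α : ℝ) (δ : NNReal) (f : ℝ → ℝ) : Prop :=
  ContDiffOn ℝ N f (Set.Icc (-1:ℝ) 0 \ {0}) ∧
  ContDiffOn ℝ 1 f (Set.Icc (-1:ℝ) 0) ∧
  ∀ j : ℕ, 2 ≤ j → j ≤ N →
    ∃ C : NNReal, ∃ g : ℝ → ℝ, HolderOnWith C δ g (Set.Icc (-1:ℝ) 0) ∧
      ∀ z ∈ Set.Icc (-1:ℝ) 0 \ {0},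
        g z = |z| ^ ((j : ℝ) - α) * iteratedDerivWithin j f (Set.Icc (-1:ℝ) 0 \ {0}) z

open Filter Topology
open scoped NNReal

noncomputable def absRpowCoeff (α : ℝ) (j : ℕ) : ℝ := (-1) ^ j * (descPochhammer ℝ j).eval α

lemma absRpowCoeff_succ (α : ℝ) (j : ℕ) :
    absRpowCoeff α (j + 1) = ((j : ℝ) - α) * absRpowCoeff α j := by
  simp only [absRpowCoeff, descPochhammer_succ_eval, pow_succ]; ring

lemma absRpowCoeff_two (α : ℝ) : absRpowCoeff α 2 = α * (α - 1) := by
  simp [absRpowCoeff, descPochhammer_succ_eval]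

lemma contDiffAt_abs_rpow (α : ℝ) {n : WithTop ℕ∞} {z : ℝ} (hz : z ≠ 0) :
    ContDiffAt ℝ n (fun z => |z| ^ α) z :=
  (Real.contDiffAt_rpow_const_of_ne (abs_pos.2 hz).ne').comp z (contDiffAt_norm ℝ hz)

lemma iteratedDeriv_abs_rpow_of_neg (α : ℝ) (j : ℕ) {z : ℝ} (hz : z < 0) :
    iteratedDeriv j (fun z => |z| ^ α) z = absRpowCoeff α j * |z| ^ (α - j) := by
  have heq : (fun z : ℝ => |z| ^ α) =ᶠ[𝓝 z] fun z => (-z) ^ α := by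
    filter_upwards [gt_mem_nhds hz] with w hw
    rw [abs_of_neg hw]
  rw [heq.iteratedDeriv_eq, iteratedDeriv_comp_neg j (fun x : ℝ => x ^ α),
    iteratedDeriv_eq_iterate, Real.iter_deriv_rpow_const, abs_of_neg hz, absRpowCoeff,
    smul_eq_mul, mul_assoc]

lemma iteratedDerivWithin_abs_rpow_of_neg (α : ℝ) (j : ℕ) {s : Set ℝ} (hs : UniqueDiffOn ℝ s)
    {z : ℝ} (hzs : z ∈ s) (hz : z < 0) :
    iteratedDerivWithin j (fun z => |z| ^ α) s z = absRpowCoeff α j * |z| ^ (α - j) := by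
  rw [iteratedDerivWithin_eq_iteratedDeriv hs (contDiffAt_abs_rpow α hz.ne) hzs,
    iteratedDeriv_abs_rpow_of_neg α j hz]

lemma hasDerivAt_iteratedDerivWithin {𝕜 F : Type*} [NontriviallyNormedField 𝕜]
    [NormedAddCommGroup F] [NormedSpace 𝕜 F] {f : 𝕜 → F} {s : Set 𝕜} {n : ℕ} {t : 𝕜}
    (hf : ContDiffOn 𝕜 (n + 1) f s) (hs : UniqueDiffOn 𝕜 s) (ht : s ∈ 𝓝 t) :
    HasDerivAt (iteratedDerivWithin n f s) (iteratedDerivWithin (n + 1) f s t) t := by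
  have hdiff := hf.differentiableOn_iteratedDerivWithin (by exact_mod_cast Nat.lt_succ_self n) hs
    t (mem_of_mem_nhds ht)
  rw [iteratedDerivWithin_succ, derivWithin_of_mem_nhds ht]
  exact (hdiff.differentiableAt ht).hasDerivAt

theorem eq_zero_of_tendsto_mul_deriv_nhdsLT {g g' : ℝ → ℝ} {a L : ℝ}
    (hg : Tendsto g (𝓝[<] 0) (𝓝 a)) (hderiv : ∀ᶠ t in 𝓝[<] 0, HasDerivAt g (g' t) t)
    (hL : Tendsto (fun t => t * g' t) (𝓝[<] 0) (𝓝 L)) : L = 0 := by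
  by_contra hL0
  have hlog : 0 < Real.log 2 := Real.log_pos one_lt_two
  obtain ⟨η, hη, hsub⟩ := mem_nhdsLT_iff_exists_Ioo_subset.1
    (hderiv.and (hL.eventually (eventually_abs_sub_lt L (half_pos (abs_pos.2 hL0)))))
  have hhalf : Tendsto (fun x : ℝ => x / 2) (𝓝[<] 0) (𝓝[<] 0) := by
    refine tendsto_nhdsWithin_of_tendsto_nhds_of_eventually_within _ ?_ ?_
    · simpa using ((continuous_id.div_const (2 : ℝ)).tendsto 0).mono_left nhdsWithin_le_nhds
    · exact eventually_mem_nhdsWithin.mono fun x (hx : x < 0) => by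
        simp only [mem_Iio]; linarith
  have hdiff : Tendsto (fun x => g (x / 2) - g x) (𝓝[<] 0) (𝓝 0) := by
    simpa using (hg.comp hhalf).sub hg
  obtain ⟨x, hsmall, hx⟩ := ((hdiff.eventually (eventually_abs_sub_lt 0
    (mul_pos hlog (half_pos (abs_pos.2 hL0))))).and (Ioo_mem_nhdsLT hη)).exists
  have hIcc : Icc x (x / 2) ⊆ Ioo η 0 := fun t ht =>
    ⟨hx.1.trans_le ht.1, by linarith [ht.2, hx.2]⟩
  -- Cauchy's mean value theorem against `log`, whose slope over `[x, x / 2]` is `-log 2`.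
  obtain ⟨ξ, hξ, hmvt⟩ := exists_ratio_hasDerivAt_eq_ratio_slope g g' (by linarith [hx.2])
    (fun t ht => (hsub (hIcc ht)).1.continuousAt.continuousWithinAt)
    (fun t ht => (hsub (hIcc (Ioo_subset_Icc_self ht))).1) Real.log (·⁻¹)
    (fun t ht => (Real.continuousAt_log (hIcc ht).2.ne).continuousWithinAt)
    (fun t ht => Real.hasDerivAt_log (hIcc (Ioo_subset_Icc_self ht)).2.ne)
  have hξ0 : ξ ≠ 0 := (hIcc (Ioo_subset_Icc_self hξ)).2.ne
  have hslope : g (x / 2) - g x = -Real.log 2 * (ξ * g' ξ) := by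
    rw [Real.log_div hx.2.ne two_ne_zero] at hmvt
    field_simp at hmvt ⊢
    linarith
  have hclose := (hsub (hIcc (Ioo_subset_Icc_self hξ))).2
  rw [sub_zero, hslope, abs_mul, abs_neg, abs_of_pos hlog] at hsmall
  have := lt_of_mul_lt_mul_left hsmall hlog.le
  linarith [abs_sub_abs_le_abs_sub L (ξ * g' ξ), abs_sub_comm L (ξ * g' ξ)]

theorem eq_mul_of_tendsto_abs_rpow_mul {p a b : ℝ} {F F' : ℝ → ℝ}
    (hF : ∀ᶠ t in 𝓝[<] 0, HasDerivAt F (F' t) t)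
    (ha : Tendsto (fun z => |z| ^ p * F z) (𝓝[<] 0) (𝓝 a))
    (hb : Tendsto (fun z => |z| ^ (p + 1) * F' z) (𝓝[<] 0) (𝓝 b)) : b = p * a := by
  have hderiv : ∀ᶠ t in 𝓝[<] 0, HasDerivAt (fun z => |z| ^ p * F z)
      (-p * |t| ^ (p - 1) * F t + |t| ^ p * F' t) t := by
    filter_upwards [hF, self_mem_nhdsWithin] with t hFt (ht : t < 0)
    exact (((hasDerivAt_abs_neg ht).rpow_const (p := p)
      (Or.inl (abs_pos.2 ht.ne).ne')).fun_mul hFt).congr_deriv (by ring)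
  have hmul : Tendsto (fun t => t * (-p * |t| ^ (p - 1) * F t + |t| ^ p * F' t)) (𝓝[<] 0)
      (𝓝 (p * a - b)) := by
    refine ((ha.const_mul p).sub hb).congr' ?_
    filter_upwards [self_mem_nhdsWithin] with t (ht : t < 0)
    have hpos : 0 < |t| := abs_pos.2 ht.ne
    have hpow : |t| ^ (p - 1) * |t| = |t| ^ p := by
      rw [← Real.rpow_add_one hpos.ne', sub_add_cancel]
    have ht' : t = -|t| := by rw [abs_of_neg ht, neg_neg]
    rw [Real.rpow_add_one hpos.ne']
    linear_combination (p * |t| ^ (p - 1) * F t - |t| ^ p * F' t) * ht' - p * F t * hpow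
  linarith [eq_zero_of_tendsto_mul_deriv_nhdsLT ha hderiv hmul]

theorem HolderOnWith.tendsto_abs_sub_rpow_neg_mul_sub {C r : ℝ≥0} {g : ℝ → ℝ} {s : Set ℝ}
    {x q : ℝ} (hg : HolderOnWith C r g s) (hx : x ∈ s) (hq : q < r) :
    Tendsto (fun y => |y - x| ^ (-q) * (g y - g x)) (𝓝[s] x) (𝓝 0) := by
  have hrq : 0 < (r : ℝ) - q := sub_pos.2 hq
  have hcont : Continuous (fun y => (C : ℝ) * |y - x| ^ ((r : ℝ) - q)) :=
    continuous_const.mul ((continuous_id.sub continuous_const).abs.rpow_const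
      fun _ => Or.inr hrq.le)
  have hlim : Tendsto (fun y => (C : ℝ) * |y - x| ^ ((r : ℝ) - q)) (𝓝[s] x) (𝓝 0) := by
    simpa [Real.zero_rpow hrq.ne'] using (hcont.tendsto x).mono_left nhdsWithin_le_nhds
  refine squeeze_zero_norm' ?_ hlim
  filter_upwards [self_mem_nhdsWithin] with y hy
  rcases eq_or_ne y x with rfl | hyx
  · simp only [sub_self, mul_zero, norm_zero]
    positivity
  have hpos : 0 < |y - x| := abs_pos.2 (sub_ne_zero.2 hyx)
  have hd := hg.dist_le hy hx
  rw [Real.dist_eq, Real.dist_eq] at hd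
  rw [norm_mul, Real.norm_eq_abs, Real.norm_eq_abs, abs_of_pos (Real.rpow_pos_of_pos hpos _)]
  calc |y - x| ^ (-q) * |g y - g x| ≤ |y - x| ^ (-q) * (C * |y - x| ^ (r : ℝ)) := by gcongr
    _ = C * |y - x| ^ ((r : ℝ) - q) := by
      rw [show (r : ℝ) - q = -q + r by ring, Real.rpow_add hpos]; ring

theorem HolderOnWith.continuousOn_abs_sub_rpow_neg_mul_sub {C r : ℝ≥0} {g : ℝ → ℝ} {s : Set ℝ}
    {x q : ℝ} (hg : HolderOnWith C r g s) (hx : x ∈ s) (hr : 0 < r) (hq : q < r) :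
    ContinuousOn (fun y => |y - x| ^ (-q) * (g y - g x)) s := by
  intro y hy
  rcases eq_or_ne y x with rfl | hyx
  · simpa [ContinuousWithinAt] using hg.tendsto_abs_sub_rpow_neg_mul_sub hx hq
  exact ((continuousAt_id.sub continuousAt_const).abs.rpow_const
    (Or.inl (abs_pos.2 (sub_ne_zero.2 hyx)).ne')).continuousWithinAt.mul
    ((hg.continuousOn hr y hy).sub continuousWithinAt_const)

theorem tendsto_nhdsLT_of_continuousOn_Icc {a b : ℝ} (hab : a < b) {g u : ℝ → ℝ}
    (hg : ContinuousOn g (Icc a b)) (hgu : EqOn g u (Icc a b \ {b})) :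
    Tendsto u (𝓝[<] b) (𝓝 (g b)) := by
  rw [← nhdsWithin_Ico_eq_nhdsLT hab]
  refine ((hg b (right_mem_Icc.2 hab.le)).mono Ico_subset_Icc_self).tendsto.congr' ?_
  filter_upwards [self_mem_nhdsWithin] with z hz
  exact hgu (by rwa [Icc_sdiff_right])

noncomputable def weightedIteratedDeriv (α : ℝ) (j : ℕ) (f : ℝ → ℝ) (z : ℝ) : ℝ :=
  |z| ^ ((j : ℝ) - α) * iteratedDerivWithin j f (Icc (-1) 0 \ {0}) z

lemma uniqueDiffOn_Icc_diff_zero : UniqueDiffOn ℝ (Icc (-1 : ℝ) 0 \ {0}) := by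
  rw [Icc_sdiff_right]
  exact uniqueDiffOn_Ico _ _

lemma Icc_diff_zero_mem_nhds {t : ℝ} (ht : t ∈ Ioo (-1 : ℝ) 0) : Icc (-1 : ℝ) 0 \ {0} ∈ 𝓝 t :=
  mem_of_superset (Ioo_mem_nhds ht.1 ht.2) fun _ hz => ⟨Ioo_subset_Icc_self hz, hz.2.ne⟩

lemma weightedIteratedDeriv_abs_rpow_add {α δ' c : ℝ} {j : ℕ} {f₁ : ℝ → ℝ}
    (hf₁ : ContDiffOn ℝ j f₁ (Icc (-1) 0 \ {0})) {z : ℝ} (hz : z ∈ Icc (-1 : ℝ) 0 \ {0}) :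
    weightedIteratedDeriv α j (fun z => c * |z| ^ α + f₁ z) z =
      c * absRpowCoeff α j + |z| ^ δ' * weightedIteratedDeriv (α + δ') j f₁ z := by
  have hz0 : z < 0 := lt_of_le_of_ne hz.1.2 hz.2
  have hpos : 0 < |z| := abs_pos.2 hz.2
  have hs := uniqueDiffOn_Icc_diff_zero
  unfold weightedIteratedDeriv
  rw [iteratedDerivWithin_fun_add hz hs
      (contDiffAt_const.mul (contDiffAt_abs_rpow α hz.2)).contDiffWithinAt (hf₁ z hz),
    iteratedDerivWithin_const_mul hz hs c (contDiffAt_abs_rpow α hz.2).contDiffWithinAt,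
    iteratedDerivWithin_abs_rpow_of_neg α j hs hz hz0]
  have hcancel : |z| ^ ((j : ℝ) - α) * |z| ^ (α - j) = 1 := by
    rw [← Real.rpow_add hpos]; simp
  have hshift : |z| ^ δ' * |z| ^ ((j : ℝ) - (α + δ')) = |z| ^ ((j : ℝ) - α) := by
    rw [← Real.rpow_add hpos]; ring_nf
  linear_combination c * absRpowCoeff α j * hcancel -
    iteratedDerivWithin j f₁ (Icc (-1) 0 \ {0}) z * hshift

theorem MemLocHolder.memLocC {N : ℕ} {α : ℝ} {δ : ℝ≥0} {f : ℝ → ℝ} (hf : MemLocHolder N α δ f)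
    (hδ : 0 < δ) : MemLocC N α f :=
  ⟨hf.1, hf.2.1, fun j hj hjN =>
    let ⟨_, g, hg, hgf⟩ := hf.2.2 j hj hjN
    ⟨g, hg.continuousOn hδ, hgf⟩⟩

theorem MemLocC.tendsto_weightedIteratedDeriv_succ {N : ℕ} {α : ℝ} {f : ℝ → ℝ}
    (hf : MemLocC N α f) {j : ℕ} (hj : 1 ≤ j) (hjN : j + 1 ≤ N) {a : ℝ}
    (ha : Tendsto (weightedIteratedDeriv α j f) (𝓝[<] 0) (𝓝 a)) :
    Tendsto (weightedIteratedDeriv α (j + 1) f) (𝓝[<] 0) (𝓝 ((j - α) * a)) := by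
  obtain ⟨g, hg, hgf⟩ := hf.2.2 (j + 1) (by omega) hjN
  have hb := tendsto_nhdsLT_of_continuousOn_Icc neg_one_lt_zero hg hgf
  have hderiv : ∀ᶠ t in 𝓝[<] 0, HasDerivAt (iteratedDerivWithin j f (Icc (-1) 0 \ {0}))
      (iteratedDerivWithin (j + 1) f (Icc (-1) 0 \ {0}) t) t := by
    filter_upwards [Ioo_mem_nhdsLT neg_one_lt_zero] with t ht
    exact hasDerivAt_iteratedDerivWithin (hf.1.of_le (by exact_mod_cast hjN))
      uniqueDiffOn_Icc_diff_zero (Icc_diff_zero_mem_nhds ht)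
  have hexp : ((j + 1 : ℕ) : ℝ) - α = (j - α) + 1 := by push_cast; ring
  unfold weightedIteratedDeriv at ha hb ⊢
  rw [hexp] at hb ⊢
  rwa [← eq_mul_of_tendsto_abs_rpow_mul hderiv ha hb]

theorem MemLocC.exists_tendsto_weightedIteratedDeriv {N : ℕ} {α : ℝ} {f : ℝ → ℝ}
    (hf : MemLocC N α f) (hN : 2 ≤ N) (hα : absRpowCoeff α 2 ≠ 0) :
    ∃ c, ∀ j, 2 ≤ j → j ≤ N →
      Tendsto (weightedIteratedDeriv α j f) (𝓝[<] 0) (𝓝 (c * absRpowCoeff α j)) := by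
  obtain ⟨g, hg, hgf⟩ := hf.2.2 2 le_rfl hN
  refine ⟨g 0 / absRpowCoeff α 2, fun j hj => ?_⟩
  induction j, hj using Nat.le_induction with
  | base =>
    intro _
    rw [div_mul_cancel₀ _ hα]
    exact tendsto_nhdsLT_of_continuousOn_Icc neg_one_lt_zero hg hgf
  | succ j hj ih =>
    intro hjN
    rw [absRpowCoeff_succ α j, mul_left_comm]
    exact hf.tendsto_weightedIteratedDeriv_succ (by omega) hjN (ih (by omega))

theorem tendsto_weightedIteratedDeriv_of_eqOn_abs_rpow_add {N : ℕ} {α δ' c : ℝ}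
    {f f₁ : ℝ → ℝ} (hδ' : 0 < δ') (hf₁ : MemLocC N (α + δ') f₁)
    (hdecomp : EqOn f (fun z => c * |z| ^ α + f₁ z) (Icc (-1) 0)) {j : ℕ} (hj : 2 ≤ j)
    (hjN : j ≤ N) :
    Tendsto (weightedIteratedDeriv α j f) (𝓝[<] 0) (𝓝 (c * absRpowCoeff α j)) := by
  obtain ⟨g, hg, hgf⟩ := hf₁.2.2 j hj hjN
  have hcont : ContinuousOn (fun z => c * absRpowCoeff α j + |z| ^ δ' * g z) (Icc (-1) 0) :=
    continuousOn_const.add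
      ((continuous_abs.rpow_const fun _ => Or.inr hδ'.le).continuousOn.mul hg)
  have hf := hdecomp.mono (sdiff_subset (t := {0}))
  have hlim := tendsto_nhdsLT_of_continuousOn_Icc (u := weightedIteratedDeriv α j f)
    neg_one_lt_zero hcont fun z hz => by
      calc c * absRpowCoeff α j + |z| ^ δ' * g z
          = c * absRpowCoeff α j + |z| ^ δ' * weightedIteratedDeriv (α + δ') j f₁ z := by
            rw [hgf z hz]; rfl
        _ = weightedIteratedDeriv α j (fun z => c * |z| ^ α + f₁ z) z :=
            (weightedIteratedDeriv_abs_rpow_add (hf₁.1.of_le (by exact_mod_cast hjN)) hz).symm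
        _ = weightedIteratedDeriv α j f z := by
            rw [weightedIteratedDeriv, weightedIteratedDeriv, iteratedDerivWithin_congr hf hz]
  simpa [Real.zero_rpow hδ'.ne'] using hlim

theorem MemLocHolder.memLocC_sub_abs_rpow {N : ℕ} {α : ℝ} {δ : ℝ≥0} {f : ℝ → ℝ}
    (hf : MemLocHolder N α δ f) (hα : 1 < α) {δ' : ℝ} (hδ' : 0 < δ') (hδ'δ : δ' < δ) {c : ℝ}
    (hc : ∀ j, 2 ≤ j → j ≤ N →
      Tendsto (weightedIteratedDeriv α j f) (𝓝[<] 0) (𝓝 (c * absRpowCoeff α j))) :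
    MemLocC N (α + δ') (fun z => f z - c * |z| ^ α) := by
  obtain ⟨hfN, hf1, hfj⟩ := hf
  have hf₁N : ContDiffOn ℝ N (fun z => f z - c * |z| ^ α) (Icc (-1) 0 \ {0}) :=
    hfN.sub (contDiffOn_const.mul fun z hz => (contDiffAt_abs_rpow α hz.2).contDiffWithinAt)
  have habs : ContDiff ℝ 1 (fun z : ℝ => |z| ^ α) := by
    simpa only [Real.norm_eq_abs] using contDiff_norm_rpow (E := ℝ) hα
  refine ⟨hf₁N, hf1.sub (contDiff_const.mul habs).contDiffOn, fun j hj hjN => ?_⟩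
  obtain ⟨C, g, hg, hgf⟩ := hfj j hj hjN
  have hδpos : 0 < δ := by exact_mod_cast hδ'.trans hδ'δ
  have hg0 : g 0 = c * absRpowCoeff α j := tendsto_nhds_unique
    (tendsto_nhdsLT_of_continuousOn_Icc neg_one_lt_zero (hg.continuousOn hδpos) hgf)
    (hc j hj hjN)
  refine ⟨fun z => |z - 0| ^ (-δ') * (g z - g 0),
    hg.continuousOn_abs_sub_rpow_neg_mul_sub ⟨by norm_num, le_rfl⟩ hδpos hδ'δ, fun z hz => ?_⟩
  have hpos : 0 < |z| := abs_pos.2 hz.2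
  have hsplit := weightedIteratedDeriv_abs_rpow_add (α := α) (c := c) (δ' := δ')
    (hf₁N.of_le (by exact_mod_cast hjN)) hz
  simp only [add_sub_cancel] at hsplit
  show |z - 0| ^ (-δ') * (g z - g 0) = _
  rw [sub_zero, hg0, show g z = weightedIteratedDeriv α j f z from hgf z hz, hsplit,
    add_sub_cancel_left, ← mul_assoc, ← Real.rpow_add hpos, neg_add_cancel, Real.rpow_zero,
    one_mul]
  rfl

theorem stmt_6_general (N : ℕ) (hN : 2 ≤ N) (α : ℝ) (hα : α ∈ Set.Ioo (1:ℝ) 2)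
    (δ : NNReal) (hδ0 : 0 < δ)
    (f : ℝ → ℝ) (hf : MemLocHolder N α δ f) :
    ∃! c₀ : ℝ, ∀ δ' : ℝ, 0 < δ' → δ' < (δ : ℝ) →
      ∃ f₁ : ℝ → ℝ, MemLocC N (α + δ') f₁ ∧
        ∀ z ∈ Set.Icc (-1:ℝ) 0, f z = c₀ * |z| ^ α + f₁ z := by
  have hK : absRpowCoeff α 2 ≠ 0 := by
    rw [absRpowCoeff_two]
    exact mul_ne_zero (by linarith [hα.1]) (by linarith [hα.1])
  obtain ⟨c₀, hc₀⟩ := (hf.memLocC hδ0).exists_tendsto_weightedIteratedDeriv hN hK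
  refine ⟨c₀, fun δ' hδ' hδ'δ =>
    ⟨_, hf.memLocC_sub_abs_rpow hα.1 hδ' hδ'δ hc₀, fun z _ => by ring⟩, fun c hc => ?_⟩
  have hδ2 : 0 < (δ : ℝ) / 2 := half_pos (NNReal.coe_pos.2 hδ0)
  obtain ⟨f₁, hf₁, hdecomp⟩ := hc _ hδ2 (half_lt_self (NNReal.coe_pos.2 hδ0))
  exact mul_right_cancel₀ hK (tendsto_nhds_unique
    (tendsto_weightedIteratedDeriv_of_eqOn_abs_rpow_add hδ2 hf₁ hdecomp le_rfl hN)
    (hc₀ 2 le_rfl hN))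

/-- decomposition lemma: for `α ∈ (1,2)`, `δ ∈ (0,1)` and
`f ∈ C_N^{α,δ}([-1,0])`, there exists a unique constant `c₀` such that for every
`δ' ∈ (0,δ)` there is `f₁ ∈ C_N^{α+δ'}` with `f = c₀ |z|^α + f₁` on `[-1,0]`. -/
theorem stmt_6 (N : ℕ) (hN : 2 ≤ N) (α : ℝ) (hα : α ∈ Set.Ioo (1:ℝ) 2)
    (δ : NNReal) (hδ0 : 0 < δ) (hδ1 : (δ : ℝ) < 1)
    (f : ℝ → ℝ) (hf : MemLocHolder N α δ f) :
    ∃! c₀ : ℝ, ∀ δ' : ℝ, 0 < δ' → δ' < (δ : ℝ) →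
      ∃ f₁ : ℝ → ℝ, MemLocC N (α + δ') f₁ ∧
        ∀ z ∈ Set.Icc (-1:ℝ) 0, f z = c₀ * |z| ^ α + f₁ z :=
  stmt_6_general N hN α hα δ hδ0 f hf
end

section
/- Consider the recurrence, for n ≥ 0: (q n + 1 + σ)(n+1) a_{n+1} = α₁ a_n + α₂ A_n and (q(n+1) + σ)(n+1) A_{n+1} + k (n+1) a_{n+1} = α₃ A_n, where q = 1 - k², σ is a complex parameter with Re σ ∈ [-1-β, -β] for some β ∈ (0, 1/2), and |α₁|, |α₂|, |α₃| ≤ d. Suppose the initial data (a₀, A₀) is chosen so that a₁ and A₁ (and hence all a_n, A_n) are well-defined (i.e. the coefficients (qn+1+σ)(n+1) and (q(n+1)+σ)(n+1) are nonzero for all n in the iteration). Then there is a constant C (depending on β, k, a₀, A₀) such that |a_n| ≤ C d^n / n! and |A_n| ≤ C d^n / n! for all n ≥ 1; consequently the power series Σ a_n (-z)^n and Σ A_n (-z)^n converge absolutely for z ∈ [-1,0]. -/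
/-!
Put `u n = ‖a n‖ + ‖A n‖`. Solving the first recurrence for `a (n+1)` and then the second for
`A (n+1)` gives `(n+1) u (n+1) ≤ r n · d · u n` with `r n = 1/|c₁| + (1 + 1/|c₁|)/|c₂|`, where
`c₁ = qn+1+σ`, `c₂ = q(n+1)+σ`. Since `q > 1/2` and `Re σ ≥ -3/2`, both `|c₁|, |c₂| ≥ 3` for
`n ≥ 8`, so `r n ≤ 1` from there on; hence `u n ≤ u 0 · ∏_{j<8} max (r j) 1 · dⁿ/n!`.
Summability then follows by comparison with the exponential series.
-/

open Finset Nat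

lemma prod_range_max_one_le_of_le_one {r : ℕ → ℝ} {N : ℕ} (hr : ∀ n, N ≤ n → r n ≤ 1) (n : ℕ) :
    ∏ j ∈ range n, max (r j) 1 ≤ ∏ j ∈ range N, max (r j) 1 := by
  rcases le_total n N with h | h
  · exact prod_le_prod_of_subset_of_one_le (range_subset_range.2 h)
      (fun j _ => zero_le_one.trans (le_max_right _ _)) (fun j _ _ => le_max_right _ _)
  · refine (prod_subset (range_subset_range.2 h) fun j _ hj => ?_).ge
    exact max_eq_right (hr j (by simpa using hj))

lemma le_mul_prod_max_one_mul_pow_div_factorial {u r : ℕ → ℝ} {d : ℝ} (hd : 0 ≤ d)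
    (hu : ∀ n, 0 ≤ u n) (hstep : ∀ n, (n + 1) * u (n + 1) ≤ r n * d * u n) (n : ℕ) :
    u n ≤ u 0 * (∏ j ∈ range n, max (r j) 1) * d ^ n / n ! := by
  induction n with
  | zero => simp
  | succ n ih =>
    have hn : (0 : ℝ) < n + 1 := by positivity
    calc u (n + 1) = (n + 1) * u (n + 1) / (n + 1) := by field_simp
      _ ≤ max (r n) 1 * d * (u 0 * (∏ j ∈ range n, max (r j) 1) * d ^ n / n !) / (n + 1) := by
          refine div_le_div_of_nonneg_right ((hstep n).trans ?_) hn.le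
          have := hu n
          gcongr
          exact le_max_left _ _
      _ = _ := by rw [prod_range_succ, pow_succ, factorial_succ]; push_cast; field_simp

lemma exists_le_mul_pow_div_factorial {u r : ℕ → ℝ} {d : ℝ} {N : ℕ} (hd : 0 ≤ d)
    (hu : ∀ n, 0 ≤ u n) (hstep : ∀ n, (n + 1) * u (n + 1) ≤ r n * d * u n)
    (hr : ∀ n, N ≤ n → r n ≤ 1) :
    ∃ C, ∀ n, u n ≤ C * d ^ n / n ! := by
  refine ⟨u 0 * ∏ j ∈ range N, max (r j) 1, fun n => ?_⟩
  refine (le_mul_prod_max_one_mul_pow_div_factorial hd hu hstep n).trans ?_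
  have := hu 0
  gcongr u 0 * ?_ * _ / _
  exact prod_range_max_one_le_of_le_one hr n

lemma norm_mul_add_norm_le_of_recurrence {𝕜 : Type*} [NormedField 𝕜]
    {c₁ c₂ κ m α₁ α₂ α₃ x X x' X' : 𝕜} {d : ℝ}
    (hc₁ : c₁ ≠ 0) (hc₂ : c₂ ≠ 0) (hκ : ‖κ‖ ≤ 1)
    (hα₁ : ‖α₁‖ ≤ d) (hα₂ : ‖α₂‖ ≤ d) (hα₃ : ‖α₃‖ ≤ d)
    (h₁ : c₁ * m * x' = α₁ * x + α₂ * X) (h₂ : c₂ * m * X' + κ * m * x' = α₃ * X) :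
    ‖m‖ * (‖x'‖ + ‖X'‖) ≤ (‖c₁‖⁻¹ + (1 + ‖c₁‖⁻¹) * ‖c₂‖⁻¹) * d * (‖x‖ + ‖X‖) := by
  have hd : 0 ≤ d := (norm_nonneg _).trans hα₁
  have e₁ : ‖c₁‖ * (‖m‖ * ‖x'‖) ≤ d * (‖x‖ + ‖X‖) := by
    calc ‖c₁‖ * (‖m‖ * ‖x'‖) = ‖α₁ * x + α₂ * X‖ := by rw [← h₁, norm_mul, norm_mul, mul_assoc]
      _ ≤ ‖α₁‖ * ‖x‖ + ‖α₂‖ * ‖X‖ := (norm_add_le _ _).trans_eq (by rw [norm_mul, norm_mul])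
      _ ≤ d * (‖x‖ + ‖X‖) := by rw [mul_add]; gcongr
  have e₂ : ‖c₂‖ * (‖m‖ * ‖X'‖) ≤ d * (‖x‖ + ‖X‖) + ‖m‖ * ‖x'‖ := by
    calc ‖c₂‖ * (‖m‖ * ‖X'‖) = ‖α₃ * X - κ * m * x'‖ := by
          rw [← h₂, add_sub_cancel_right, norm_mul, norm_mul, mul_assoc]
      _ ≤ ‖α₃‖ * ‖X‖ + ‖κ‖ * (‖m‖ * ‖x'‖) :=
          (norm_sub_le _ _).trans_eq (by rw [norm_mul, norm_mul, norm_mul, mul_assoc])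
      _ ≤ d * (‖x‖ + ‖X‖) + 1 * (‖m‖ * ‖x'‖) := by
          gcongr
          exact le_add_of_nonneg_left (norm_nonneg x)
      _ = _ := by rw [one_mul]
  have hx' := (le_inv_mul_iff₀ (norm_pos_iff.2 hc₁)).2 e₁
  have hX' := (le_inv_mul_iff₀ (norm_pos_iff.2 hc₂)).2 e₂
  calc ‖m‖ * (‖x'‖ + ‖X'‖) = ‖m‖ * ‖x'‖ + ‖m‖ * ‖X'‖ := mul_add _ _ _
    _ ≤ ‖c₁‖⁻¹ * (d * (‖x‖ + ‖X‖)) +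
          ‖c₂‖⁻¹ * (d * (‖x‖ + ‖X‖) + ‖c₁‖⁻¹ * (d * (‖x‖ + ‖X‖))) :=
        add_le_add hx' (hX'.trans (by gcongr))
    _ = _ := by ring

lemma inv_add_one_add_inv_mul_inv_le_one {r₁ r₂ : ℝ} (h₁ : 3 ≤ r₁) (h₂ : 3 ≤ r₂) :
    r₁⁻¹ + (1 + r₁⁻¹) * r₂⁻¹ ≤ 1 := by
  have i₁ : r₁⁻¹ ≤ 3⁻¹ := inv_anti₀ (by norm_num) h₁
  have i₂ : r₂⁻¹ ≤ 3⁻¹ := inv_anti₀ (by norm_num) h₂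
  calc r₁⁻¹ + (1 + r₁⁻¹) * r₂⁻¹ ≤ 3⁻¹ + (1 + 3⁻¹) * 3⁻¹ := by gcongr
    _ ≤ 1 := by norm_num

lemma summable_norm_mul_pow_of_norm_le_mul_pow_div_factorial {R : Type*} [NormedRing R]
    [NormOneClass R] {f : ℕ → R} {C d : ℝ} (hf : ∀ n, ‖f n‖ ≤ C * d ^ n / n !) (w : R) :
    Summable fun n => ‖f n * w ^ n‖ := by
  refine .of_nonneg_of_le (fun n => norm_nonneg _) (fun n => ?_)
    ((Real.summable_pow_div_factorial (d * ‖w‖)).mul_left C)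
  calc ‖f n * w ^ n‖ ≤ ‖f n‖ * ‖w‖ ^ n :=
        (norm_mul_le _ _).trans (by gcongr; exact norm_pow_le _ _)
    _ ≤ C * d ^ n / n ! * ‖w‖ ^ n := by gcongr; exact hf n
    _ = C * ((d * ‖w‖) ^ n / n !) := by ring

theorem stmt_7_general (k β d q : ℝ) (σ α₁ α₂ α₃ : ℂ) (a A : ℕ → ℂ)
    (hksmall : k^2 < 1/2) (hq : q = 1 - k^2)
    (hβ : β ∈ Set.Ioo (0:ℝ) (1/2))
    (hσ : σ.re ∈ Set.Icc (-1-β) (-β))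
    (hd : 0 ≤ d) (hα₁ : ‖α₁‖ ≤ d) (hα₂ : ‖α₂‖ ≤ d) (hα₃ : ‖α₃‖ ≤ d)
    (hcoef : ∀ n : ℕ, ((q : ℂ) * n + 1 + σ ≠ 0) ∧ ((q : ℂ) * ((n : ℂ) + 1) + σ ≠ 0))
    (hrec1 : ∀ n : ℕ,
      ((q : ℂ) * n + 1 + σ) * ((n : ℂ) + 1) * a (n+1) = α₁ * a n + α₂ * A n)
    (hrec2 : ∀ n : ℕ,
      ((q : ℂ) * ((n : ℂ) + 1) + σ) * ((n : ℂ) + 1) * A (n+1)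
        + (k : ℂ) * ((n : ℂ) + 1) * a (n+1) = α₃ * A n) :
    ∃ C : ℝ,
      (∀ n : ℕ, 1 ≤ n →
        ‖a n‖ ≤ C * d ^ n / (n.factorial : ℝ) ∧ ‖A n‖ ≤ C * d ^ n / (n.factorial : ℝ)) ∧
      ∀ z ∈ Set.Icc (-1:ℝ) 0,
        Summable (fun n : ℕ => ‖a n * ((-z : ℝ) : ℂ) ^ n‖) ∧
        Summable (fun n : ℕ => ‖A n * ((-z : ℝ) : ℂ) ^ n‖) := by
  have hq' : 1 / 2 < q := by linarith
  have hσ' : -(3 / 2) ≤ σ.re := by linarith [hσ.1, hβ.2]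
  have hk : ‖(k : ℂ)‖ ≤ 1 := by
    rw [Complex.norm_real, Real.norm_eq_abs, ← sq_le_one_iff_abs_le_one]; linarith
  have hc₁ (n : ℕ) (hn : 8 ≤ n) : 3 ≤ ‖(q : ℂ) * n + 1 + σ‖ := by
    have : (8 : ℝ) ≤ n := by exact_mod_cast hn
    calc (3 : ℝ) ≤ q * n + 1 + σ.re := by nlinarith
      _ = ((q : ℂ) * n + 1 + σ).re := by simp
      _ ≤ _ := Complex.re_le_norm _
  have hc₂ (n : ℕ) (hn : 8 ≤ n) : 3 ≤ ‖(q : ℂ) * ((n : ℂ) + 1) + σ‖ := by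
    have : (8 : ℝ) ≤ n := by exact_mod_cast hn
    calc (3 : ℝ) ≤ q * (n + 1) + σ.re := by nlinarith
      _ = ((q : ℂ) * ((n : ℂ) + 1) + σ).re := by simp
      _ ≤ _ := Complex.re_le_norm _
  have hstep (n : ℕ) := norm_mul_add_norm_le_of_recurrence (hcoef n).1 (hcoef n).2 hk
    hα₁ hα₂ hα₃ (hrec1 n) (hrec2 n)
  simp only [show ∀ n : ℕ, ‖(n : ℂ) + 1‖ = n + 1 from fun n => by norm_cast] at hstep
  obtain ⟨C, hC⟩ := exists_le_mul_pow_div_factorial hd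
    (fun n => add_nonneg (norm_nonneg (a n)) (norm_nonneg (A n))) hstep
    fun n hn => inv_add_one_add_inv_mul_inv_le_one (hc₁ n hn) (hc₂ n hn)
  have ha (n : ℕ) : ‖a n‖ ≤ C * d ^ n / n ! :=
    (le_add_of_nonneg_right (norm_nonneg _)).trans (hC n)
  have hA (n : ℕ) : ‖A n‖ ≤ C * d ^ n / n ! :=
    (le_add_of_nonneg_left (norm_nonneg _)).trans (hC n)
  exact ⟨C, fun n _ => ⟨ha n, hA n⟩, fun z _ =>
    ⟨summable_norm_mul_pow_of_norm_le_mul_pow_div_factorial ha _,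
      summable_norm_mul_pow_of_norm_le_mul_pow_div_factorial hA _⟩⟩

/-- coefficient bounds `|a_n|, |A_n| ≤ C dⁿ/n!` for the Frobenius recurrence
`(qn+1+σ)(n+1) a_{n+1} = α₁ a_n + α₂ A_n`,
`(q(n+1)+σ)(n+1) A_{n+1} + k(n+1) a_{n+1} = α₃ A_n`,
with `q = 1-k²`, `Re σ ∈ [-1-β,-β]`, `β ∈ (0,1/2)`, `|αᵢ| ≤ d`, assuming the coefficients
of the recurrence never vanish; consequently the power series `Σ a_n (-z)^n`, `Σ A_n (-z)^n`
converge absolutely for `z ∈ [-1,0]`. -/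
theorem stmt_7 (k β d q : ℝ) (σ α₁ α₂ α₃ : ℂ) (a A : ℕ → ℂ)
    (hk : k ≠ 0) (hksmall : k^2 < 1/2) (hq : q = 1 - k^2)
    (hβ : β ∈ Set.Ioo (0:ℝ) (1/2))
    (hσ : σ.re ∈ Set.Icc (-1-β) (-β))
    (hd : 0 ≤ d) (hα₁ : ‖α₁‖ ≤ d) (hα₂ : ‖α₂‖ ≤ d) (hα₃ : ‖α₃‖ ≤ d)
    (hcoef : ∀ n : ℕ, ((q : ℂ) * n + 1 + σ ≠ 0) ∧ ((q : ℂ) * ((n : ℂ) + 1) + σ ≠ 0))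
    (hrec1 : ∀ n : ℕ,
      ((q : ℂ) * n + 1 + σ) * ((n : ℂ) + 1) * a (n+1) = α₁ * a n + α₂ * A n)
    (hrec2 : ∀ n : ℕ,
      ((q : ℂ) * ((n : ℂ) + 1) + σ) * ((n : ℂ) + 1) * A (n+1)
        + (k : ℂ) * ((n : ℂ) + 1) * a (n+1) = α₃ * A n) :
    ∃ C : ℝ,
      (∀ n : ℕ, 1 ≤ n →
        ‖a n‖ ≤ C * d ^ n / (n.factorial : ℝ) ∧ ‖A n‖ ≤ C * d ^ n / (n.factorial : ℝ)) ∧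
      ∀ z ∈ Set.Icc (-1:ℝ) 0,
        Summable (fun n : ℕ => ‖a n * ((-z : ℝ) : ℂ) ^ n‖) ∧
        Summable (fun n : ℕ => ‖A n * ((-z : ℝ) : ℂ) ^ n‖) :=
  stmt_7_general k β d q σ α₁ α₂ α₃ a A hksmall hq hβ hσ hd hα₁ hα₂ hα₃ hcoef hrec1 hrec2
end

section
/- Let k ≠ 0, q = 1-k², and let Y_σ(z) be the 4×4 fundamental matrix of the first-order system associated to q z f'' + (1+σ) f' + d₁ f + d₂ g = 0, q z g'' + k f' + (q+σ) g' + d₃ g = 0, formed from a solution basis whose leading-order behaviors at z = 0 are (1, kq/σ), (0, 1+σ/q), (-z)^{-(k²+σ)/q}(1, 1/k), and (-z)^{-σ/q}(0,1). Then det Y_σ(z) = (1 + σ/q) · ((k²+σ)/q) · (σ/q) · (-z)^{-(k²+2σ)/q - 2} for all z ∈ (-1,0). In particular, Y_σ is invertible for z ∈ (-1,0) if and only if σ ∉ {-q, -k², 0}. -/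
/-!
By Liouville's formula, `W = det Y_σ` solves `W' = tr(L) W` with `tr L = (1 + q + 2σ) / (q (-z))`,
so `(-z) ^ ((1 + q + 2σ) / q) * W` is constant on `(-1, 0)`. Because `q = 1 - k²`, this exponent is
`μ + ν + 2` with `μ = (k² + σ) / q`, `ν = σ / q`: exactly the weight picked up by `det Y_σ` when
the last two columns are multiplied by `(-z) ^ μ`, `(-z) ^ ν` and the two derivative rows by `-z`.
The rescaled matrix tends, as `z → 0⁻`, to a block-triangular matrix of determinant `(1 + ν) μ ν`.
-/

open Filter Set Topology Matrix

namespace Matrix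

section Calculus

variable {n : Type*} [Fintype n] [DecidableEq n] {𝕜 𝔸 : Type*} [NontriviallyNormedField 𝕜]
  [NormedCommRing 𝔸] [NormedAlgebra 𝕜 𝔸] {A : 𝕜 → Matrix n n 𝔸} {x : 𝕜}

lemma det_eq_sum_sign_smul_prod_row (M : Matrix n n 𝔸) :
    M.det = ∑ σ : Equiv.Perm n, Equiv.Perm.sign σ • ∏ i, M i (σ i) := by
  rw [← det_transpose, det_apply]
  rfl

theorem hasDerivAt_det {A' : Matrix n n 𝔸} (h : ∀ i j, HasDerivAt (fun t ↦ A t i j) (A' i j) x) :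
    HasDerivAt (fun t ↦ (A t).det) (∑ i, ((A x).updateRow i (A' i)).det) x := by
  simp only [det_eq_sum_sign_smul_prod_row]
  refine (HasDerivAt.fun_sum fun σ _ ↦ (HasDerivAt.fun_finsetProd fun i _ ↦ h i (σ i)).const_smul
    (Equiv.Perm.sign σ)).congr_deriv ?_
  rw [Finset.sum_comm]
  refine Finset.sum_congr rfl fun σ _ ↦ ?_
  rw [Finset.smul_sum]
  refine Finset.sum_congr rfl fun i _ ↦ ?_
  have hrow : ∀ j, (A x).updateRow i (A' i) j (σ j)
      = Function.update (fun j ↦ A x j (σ j)) i (A' i (σ i)) j := by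
    intro j
    by_cases hj : j = i
    · subst hj; simp
    · simp [updateRow_apply, hj]
  simp only [hrow, Finset.prod_update_of_mem (Finset.mem_univ i), Finset.sdiff_singleton_eq_erase,
    smul_eq_mul, mul_comm]

theorem hasDerivAt_det_of_hasDerivAt_eq_mul {C : Matrix n n 𝔸}
    (h : ∀ i j, HasDerivAt (fun t ↦ A t i j) ((C * A x) i j) x) :
    HasDerivAt (fun t ↦ (A t).det) (C.trace * (A x).det) x := by
  convert hasDerivAt_det h using 1
  have hrow : ∀ i, (C * A x) i = ∑ k, C i k • A x k := by
    intro i; ext j; simp [mul_apply]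
  simp only [hrow, det_updateRow_sum, trace, diag, smul_eq_mul, Finset.sum_mul]

end Calculus

theorem tendsto_prod_mul_prod_mul_det {α n R : Type*} [Fintype n] [DecidableEq n] [CommRing R]
    [TopologicalSpace R] [IsTopologicalRing R] {l : Filter α} {Y : α → Matrix n n R}
    {r c : α → n → R} {B : Matrix n n R}
    (h : ∀ i j, Tendsto (fun t ↦ r t i * (c t j * Y t i j)) l (𝓝 (B i j))) :
    Tendsto (fun t ↦ (∏ i, r t i) * (∏ j, c t j) * (Y t).det) l (𝓝 B.det) := by
  have hdet : ∀ t, (∏ i, r t i) * (∏ j, c t j) * (Y t).det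
      = (diagonal (r t) * Y t * diagonal (c t)).det := by
    intro t; simp only [det_mul, det_diagonal]; ring
  simp only [hdet]
  exact (continuous_id.matrix_det.tendsto B).comp <| tendsto_pi_nhds.2 fun i ↦
    tendsto_pi_nhds.2 fun j ↦ by
      simpa only [diagonal_mul, mul_diagonal, mul_assoc, mul_comm (Y _ i j)] using h i j

end Matrix

lemma hasDerivAt_ofReal_neg_cpow {z : ℝ} (hz : z < 0) (Q : ℂ) :
    HasDerivAt (fun t : ℝ ↦ ((-t : ℝ) : ℂ) ^ Q) (-(Q * ((-z : ℝ) : ℂ) ^ (Q - 1))) z := by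
  have hslit : -(z : ℂ) ∈ Complex.slitPlane := by
    rw [← Complex.ofReal_neg]; exact Complex.ofReal_mem_slitPlane.2 (by linarith)
  simpa using (((hasDerivAt_id (z : ℂ)).neg).cpow_const (c := Q) hslit).comp_ofReal

lemma ofReal_neg_cpow_mul_eq {W : ℝ → ℂ} {Q : ℂ} {a : ℝ}
    (hW : ∀ z ∈ Ioo a 0, HasDerivAt W (Q / ((-z : ℝ) : ℂ) * W z) z) {x y : ℝ}
    (hx : x ∈ Ioo a 0) (hy : y ∈ Ioo a 0) :
    ((-x : ℝ) : ℂ) ^ Q * W x = ((-y : ℝ) : ℂ) ^ Q * W y := by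
  have hderiv : ∀ z ∈ Ioo a 0, HasDerivAt (fun t : ℝ ↦ ((-t : ℝ) : ℂ) ^ Q * W t) 0 z := by
    intro z hz
    have hs : ((-z : ℝ) : ℂ) ≠ 0 := Complex.ofReal_ne_zero.2 (by linarith [hz.2])
    refine ((hasDerivAt_ofReal_neg_cpow hz.2 Q).mul (hW z hz)).congr_deriv ?_
    rw [Complex.cpow_sub _ _ hs, Complex.cpow_one]
    field_simp
    ring
  exact isOpen_Ioo.is_const_of_deriv_eq_zero isPreconnected_Ioo
    (fun z hz ↦ (hderiv z hz).differentiableAt.differentiableWithinAt)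
    (fun z hz ↦ (hderiv z hz).deriv) hx hy

lemma ofReal_neg_cpow_mul_eq_of_tendsto {W : ℝ → ℂ} {Q L : ℂ} {a : ℝ}
    (hW : ∀ z ∈ Ioo a 0, HasDerivAt W (Q / ((-z : ℝ) : ℂ) * W z) z)
    (hL : Tendsto (fun z : ℝ ↦ ((-z : ℝ) : ℂ) ^ Q * W z) (𝓝[<] 0) (𝓝 L))
    {z : ℝ} (hz : z ∈ Ioo a 0) : ((-z : ℝ) : ℂ) ^ Q * W z = L := by
  refine tendsto_nhds_unique (tendsto_const_nhds.congr' ?_) hL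
  filter_upwards [Ioo_mem_nhdsLT (hz.1.trans hz.2)] with t ht
  exact ofReal_neg_cpow_mul_eq hW hz ht

lemma tendsto_ofReal_neg_mul_cpow {u : ℝ → ℂ} {a L : ℂ}
    (h : Tendsto (fun z : ℝ ↦ ((-z : ℝ) : ℂ) ^ (a + 1) * u z) (𝓝[<] 0) (𝓝 L)) :
    Tendsto (fun z : ℝ ↦ ((-z : ℝ) : ℂ) * (((-z : ℝ) : ℂ) ^ a * u z)) (𝓝[<] 0) (𝓝 L) := by
  refine h.congr' ?_
  filter_upwards [self_mem_nhdsWithin] with z (hz : z < 0)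
  rw [Complex.cpow_add _ _ (Complex.ofReal_ne_zero.2 (by linarith)), Complex.cpow_one]
  ring

lemma tendsto_ofReal_neg_mul_of_tendsto {u : ℝ → ℂ} (hu : ∃ c, Tendsto u (𝓝[<] 0) (𝓝 c)) :
    Tendsto (fun z : ℝ ↦ ((-z : ℝ) : ℂ) * u z) (𝓝[<] 0) (𝓝 0) := by
  obtain ⟨c, hc⟩ := hu
  have h0 : Tendsto (fun z : ℝ ↦ ((-z : ℝ) : ℂ)) (𝓝[<] 0) (𝓝 0) := by
    simpa using ((by fun_prop : Continuous fun z : ℝ ↦ ((-z : ℝ) : ℂ)).tendsto 0).mono_left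
      nhdsWithin_le_nhds
  simpa using h0.mul hc

lemma one_add_div_mul_add_div_mul_div_ne_zero_iff {q a σ : ℂ} (hq : q ≠ 0) :
    (1 + σ / q) * ((a + σ) / q) * (σ / q) ≠ 0 ↔ σ ≠ -q ∧ σ ≠ -a ∧ σ ≠ 0 := by
  rw [one_add_div hq]
  simp [hq, eq_neg_iff_add_eq_zero, add_comm, and_assoc]

def fundamentalMatrix (f g f' g' : Fin 4 → ℝ → ℂ) (z : ℝ) : Matrix (Fin 4) (Fin 4) ℂ :=
  Matrix.of fun i j ↦ ![f j z, g j z, f' j z, g' j z] i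

/-- The paper's `L_p`: the system reads `Y' = L_p Y` for the vector `(f, g, f', g')`. -/
noncomputable def systemMatrix (k q : ℝ) (σ d₁ d₂ d₃ : ℂ) (z : ℝ) : Matrix (Fin 4) (Fin 4) ℂ :=
  let c : ℂ := ((q : ℂ) * z)⁻¹
  !![0, 0, 1, 0;
     0, 0, 0, 1;
     -c * d₁, -c * d₂, -c * (1 + σ), 0;
     0, -c * d₃, -c * k, -c * (q + σ)]

lemma trace_systemMatrix (k q : ℝ) (σ d₁ d₂ d₃ : ℂ) (z : ℝ) :
    (systemMatrix k q σ d₁ d₂ d₃ z).trace = (1 + q + 2 * σ) / q / ((-z : ℝ) : ℂ) := by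
  simp [systemMatrix, trace, Fin.sum_univ_four]
  ring

lemma hasDerivAt_fundamentalMatrix {k q : ℝ} {σ d₁ d₂ d₃ : ℂ}
    {f g f' g' f'' g'' : Fin 4 → ℝ → ℂ} {z : ℝ} (hz : z ≠ 0) (hq : q ≠ 0)
    (hdf : ∀ j, HasDerivAt (f j) (f' j z) z) (hdf' : ∀ j, HasDerivAt (f' j) (f'' j z) z)
    (hdg : ∀ j, HasDerivAt (g j) (g' j z) z) (hdg' : ∀ j, HasDerivAt (g' j) (g'' j z) z)
    (hode1 : ∀ j, (q : ℂ) * z * f'' j z + (1 + σ) * f' j z + d₁ * f j z + d₂ * g j z = 0)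
    (hode2 : ∀ j,
      (q : ℂ) * z * g'' j z + (k : ℂ) * f' j z + ((q : ℂ) + σ) * g' j z + d₃ * g j z = 0)
    (i j : Fin 4) :
    HasDerivAt (fun t ↦ fundamentalMatrix f g f' g' t i j)
      ((systemMatrix k q σ d₁ d₂ d₃ z * fundamentalMatrix f g f' g' z) i j) z := by
  have hq' : (q : ℂ) ≠ 0 := by exact_mod_cast hq
  have hz' : (z : ℂ) ≠ 0 := by exact_mod_cast hz
  fin_cases i <;> simp [fundamentalMatrix, systemMatrix, mul_apply, Fin.sum_univ_four]
  · exact hdf j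
  · exact hdg j
  · refine (hdf' j).congr_deriv ?_
    field_simp
    linear_combination hode1 j
  · refine (hdg' j).congr_deriv ?_
    field_simp
    linear_combination hode2 j

lemma tendsto_cpow_mul_det_fundamentalMatrix {f g f' g' : Fin 4 → ℝ → ℂ} {μ ν α β γ δ : ℂ}
    (h1f : Tendsto (f 0) (𝓝[<] 0) (𝓝 1)) (h1g : Tendsto (g 0) (𝓝[<] 0) (𝓝 α))
    (h1f' : ∃ c, Tendsto (f' 0) (𝓝[<] 0) (𝓝 c)) (h1g' : ∃ c, Tendsto (g' 0) (𝓝[<] 0) (𝓝 c))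
    (h2f : Tendsto (f 1) (𝓝[<] 0) (𝓝 0)) (h2g : Tendsto (g 1) (𝓝[<] 0) (𝓝 β))
    (h2f' : ∃ c, Tendsto (f' 1) (𝓝[<] 0) (𝓝 c)) (h2g' : ∃ c, Tendsto (g' 1) (𝓝[<] 0) (𝓝 c))
    (h3f : Tendsto (fun z : ℝ ↦ ((-z : ℝ) : ℂ) ^ μ * f 2 z) (𝓝[<] 0) (𝓝 1))
    (h3g : Tendsto (fun z : ℝ ↦ ((-z : ℝ) : ℂ) ^ μ * g 2 z) (𝓝[<] 0) (𝓝 γ))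
    (h3f' : Tendsto (fun z : ℝ ↦ ((-z : ℝ) : ℂ) ^ (μ + 1) * f' 2 z) (𝓝[<] 0) (𝓝 μ))
    (h3g' : Tendsto (fun z : ℝ ↦ ((-z : ℝ) : ℂ) ^ (μ + 1) * g' 2 z) (𝓝[<] 0) (𝓝 δ))
    (h4f : Tendsto (fun z : ℝ ↦ ((-z : ℝ) : ℂ) ^ ν * f 3 z) (𝓝[<] 0) (𝓝 0))
    (h4g : Tendsto (fun z : ℝ ↦ ((-z : ℝ) : ℂ) ^ ν * g 3 z) (𝓝[<] 0) (𝓝 1))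
    (h4f' : Tendsto (fun z : ℝ ↦ ((-z : ℝ) : ℂ) ^ (ν + 1) * f' 3 z) (𝓝[<] 0) (𝓝 0))
    (h4g' : Tendsto (fun z : ℝ ↦ ((-z : ℝ) : ℂ) ^ (ν + 1) * g' 3 z) (𝓝[<] 0) (𝓝 ν)) :
    Tendsto (fun z : ℝ ↦ ((-z : ℝ) : ℂ) ^ (μ + ν + 2) * (fundamentalMatrix f g f' g' z).det)
      (𝓝[<] 0) (𝓝 (β * μ * ν)) := by
  have hB : (!![1, 0, 1, 0; α, β, γ, 1; 0, 0, μ, 0; 0, 0, δ, ν] : Matrix (Fin 4) (Fin 4) ℂ).det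
      = β * μ * ν := by
    simp [det_succ_row_zero, Fin.sum_univ_succ]
    ring
  have hentries : ∀ i j, Tendsto (fun z : ℝ ↦ ![1, 1, ((-z : ℝ) : ℂ), ((-z : ℝ) : ℂ)] i *
      (![1, 1, ((-z : ℝ) : ℂ) ^ μ, ((-z : ℝ) : ℂ) ^ ν] j * fundamentalMatrix f g f' g' z i j))
      (𝓝[<] 0) (𝓝 (!![1, 0, 1, 0; α, β, γ, 1; 0, 0, μ, 0; 0, 0, δ, ν] i j)) := by
    intro i j
    fin_cases i <;> fin_cases j <;>
      simp only [fundamentalMatrix, of_apply, Fin.zero_eta, Fin.mk_one, Fin.reduceFinMk, cons_val,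
        one_mul]
    exacts [h1f, h2f, h3f, h4f, h1g, h2g, h3g, h4g,
      tendsto_ofReal_neg_mul_of_tendsto h1f', tendsto_ofReal_neg_mul_of_tendsto h2f',
      tendsto_ofReal_neg_mul_cpow h3f', tendsto_ofReal_neg_mul_cpow h4f',
      tendsto_ofReal_neg_mul_of_tendsto h1g', tendsto_ofReal_neg_mul_of_tendsto h2g',
      tendsto_ofReal_neg_mul_cpow h3g', tendsto_ofReal_neg_mul_cpow h4g']
  refine hB ▸ (tendsto_prod_mul_prod_mul_det hentries).congr' ?_
  filter_upwards [self_mem_nhdsWithin] with z (hz : z < 0)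
  have hs : ((-z : ℝ) : ℂ) ≠ 0 := Complex.ofReal_ne_zero.2 (by linarith)
  simp only [Fin.prod_univ_four, cons_val]
  rw [Complex.cpow_add _ _ hs, Complex.cpow_add _ _ hs, Complex.cpow_two]
  ring

theorem stmt_9_general (k q : ℝ) (σ d₁ d₂ d₃ : ℂ) (hq : q = 1 - k^2) (hq0 : 0 < q)
    (f g f' g' f'' g'' : Fin 4 → ℝ → ℂ)
    (hdf : ∀ i, ∀ z ∈ Set.Ioo (-1:ℝ) 0, HasDerivAt (f i) (f' i z) z)
    (hdf' : ∀ i, ∀ z ∈ Set.Ioo (-1:ℝ) 0, HasDerivAt (f' i) (f'' i z) z)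
    (hdg : ∀ i, ∀ z ∈ Set.Ioo (-1:ℝ) 0, HasDerivAt (g i) (g' i z) z)
    (hdg' : ∀ i, ∀ z ∈ Set.Ioo (-1:ℝ) 0, HasDerivAt (g' i) (g'' i z) z)
    (hode1 : ∀ i, ∀ z ∈ Set.Ioo (-1:ℝ) 0,
      (q : ℂ) * z * f'' i z + (1 + σ) * f' i z + d₁ * f i z + d₂ * g i z = 0)
    (hode2 : ∀ i, ∀ z ∈ Set.Ioo (-1:ℝ) 0,
      (q : ℂ) * z * g'' i z + (k : ℂ) * f' i z + ((q : ℂ) + σ) * g' i z + d₃ * g i z = 0)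
    -- leading-order behavior of the first column `(1, kq/σ) + O(z)`:
    (h1f : Tendsto (f 0) (nhdsWithin 0 (Set.Iio 0)) (nhds 1))
    (h1g : Tendsto (g 0) (nhdsWithin 0 (Set.Iio 0)) (nhds ((k : ℂ) * q / σ)))
    (h1f' : ∃ c : ℂ, Tendsto (f' 0) (nhdsWithin 0 (Set.Iio 0)) (nhds c))
    (h1g' : ∃ c : ℂ, Tendsto (g' 0) (nhdsWithin 0 (Set.Iio 0)) (nhds c))
    -- leading-order behavior of the second column `(0, 1+σ/q) + O(z)`:
    (h2f : Tendsto (f 1) (nhdsWithin 0 (Set.Iio 0)) (nhds 0))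
    (h2g : Tendsto (g 1) (nhdsWithin 0 (Set.Iio 0)) (nhds (1 + σ / (q : ℂ))))
    (h2f' : ∃ c : ℂ, Tendsto (f' 1) (nhdsWithin 0 (Set.Iio 0)) (nhds c))
    (h2g' : ∃ c : ℂ, Tendsto (g' 1) (nhdsWithin 0 (Set.Iio 0)) (nhds c))
    -- leading-order behavior of the third column `(-z)^{-μ}(1, 1/k) + …`, `μ = (k²+σ)/q`:
    (h3f : Tendsto (fun z : ℝ => ((-z : ℝ) : ℂ) ^ (((k : ℂ)^2 + σ) / (q : ℂ)) * f 2 z)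
      (nhdsWithin 0 (Set.Iio 0)) (nhds 1))
    (h3g : Tendsto (fun z : ℝ => ((-z : ℝ) : ℂ) ^ (((k : ℂ)^2 + σ) / (q : ℂ)) * g 2 z)
      (nhdsWithin 0 (Set.Iio 0)) (nhds (1 / (k : ℂ))))
    (h3f' : Tendsto (fun z : ℝ => ((-z : ℝ) : ℂ) ^ (((k : ℂ)^2 + σ) / (q : ℂ) + 1) * f' 2 z)
      (nhdsWithin 0 (Set.Iio 0)) (nhds (((k : ℂ)^2 + σ) / (q : ℂ))))
    (h3g' : Tendsto (fun z : ℝ => ((-z : ℝ) : ℂ) ^ (((k : ℂ)^2 + σ) / (q : ℂ) + 1) * g' 2 z)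
      (nhdsWithin 0 (Set.Iio 0)) (nhds (((k : ℂ)^2 + σ) / ((q : ℂ) * (k : ℂ)))))
    -- leading-order behavior of the fourth column `(-z)^{-ν}(0, 1) + …`, `ν = σ/q`:
    (h4f : Tendsto (fun z : ℝ => ((-z : ℝ) : ℂ) ^ (σ / (q : ℂ)) * f 3 z)
      (nhdsWithin 0 (Set.Iio 0)) (nhds 0))
    (h4g : Tendsto (fun z : ℝ => ((-z : ℝ) : ℂ) ^ (σ / (q : ℂ)) * g 3 z)
      (nhdsWithin 0 (Set.Iio 0)) (nhds 1))
    (h4f' : Tendsto (fun z : ℝ => ((-z : ℝ) : ℂ) ^ (σ / (q : ℂ) + 1) * f' 3 z)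
      (nhdsWithin 0 (Set.Iio 0)) (nhds 0))
    (h4g' : Tendsto (fun z : ℝ => ((-z : ℝ) : ℂ) ^ (σ / (q : ℂ) + 1) * g' 3 z)
      (nhdsWithin 0 (Set.Iio 0)) (nhds (σ / (q : ℂ)))) :
    ∀ z ∈ Set.Ioo (-1:ℝ) 0,
      (Matrix.of fun i j : Fin 4 => ![f j z, g j z, f' j z, g' j z] i).det
        = (1 + σ / (q : ℂ)) * (((k : ℂ)^2 + σ) / (q : ℂ)) * (σ / (q : ℂ)) *
            ((-z : ℝ) : ℂ) ^ (-(((k : ℂ)^2 + 2*σ) / (q : ℂ)) - 2) ∧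
      (IsUnit (Matrix.of fun i j : Fin 4 => ![f j z, g j z, f' j z, g' j z] i) ↔
        (σ ≠ -(q : ℂ) ∧ σ ≠ -((k : ℂ)^2) ∧ σ ≠ 0)) := by
  have hq' : (q : ℂ) ≠ 0 := by exact_mod_cast hq0.ne'
  set μ : ℂ := ((k : ℂ)^2 + σ) / q
  set ν : ℂ := σ / q
  have hW : ∀ z ∈ Ioo (-1 : ℝ) 0, HasDerivAt (fun t ↦ (fundamentalMatrix f g f' g' t).det)
      ((μ + ν + 2) / ((-z : ℝ) : ℂ) * (fundamentalMatrix f g f' g' z).det) z := by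
    intro z hz
    have htrace : (1 + q + 2 * σ) / q = μ + ν + 2 := by
      have hq2 : (q : ℂ) = 1 - (k : ℂ)^2 := by exact_mod_cast hq
      simp only [μ, ν]
      field_simp
      linear_combination -hq2
    rw [← htrace, ← trace_systemMatrix k q σ d₁ d₂ d₃ z]
    exact hasDerivAt_det_of_hasDerivAt_eq_mul <| hasDerivAt_fundamentalMatrix hz.2.ne hq0.ne'
      (hdf · z hz) (hdf' · z hz) (hdg · z hz) (hdg' · z hz) (hode1 · z hz) (hode2 · z hz)
  have hL := tendsto_cpow_mul_det_fundamentalMatrix h1f h1g h1f' h1g' h2f h2g h2f' h2g'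
    h3f h3g h3f' h3g' h4f h4g h4f' h4g'
  intro z hz
  have hs : ((-z : ℝ) : ℂ) ≠ 0 := Complex.ofReal_ne_zero.2 (by linarith [hz.2])
  have hdet : (fundamentalMatrix f g f' g' z).det
      = (1 + ν) * μ * ν * ((-z : ℝ) : ℂ) ^ (-(((k : ℂ)^2 + 2*σ) / q) - 2) := by
    have hsQ : ((-z : ℝ) : ℂ) ^ (μ + ν + 2) ≠ 0 := Complex.cpow_ne_zero_iff.2 (.inl hs)
    rw [← ofReal_neg_cpow_mul_eq_of_tendsto hW hL hz,
      show -(((k : ℂ)^2 + 2*σ) / q) - 2 = -(μ + ν + 2) by ring, Complex.cpow_neg]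
    field_simp
  refine ⟨hdet, ?_⟩
  rw [isUnit_iff_isUnit_det, isUnit_iff_ne_zero]
  change (fundamentalMatrix f g f' g' z).det ≠ 0 ↔ _
  rw [hdet, mul_ne_zero_iff, and_iff_left (Complex.cpow_ne_zero_iff.2 (.inl hs))]
  exact one_add_div_mul_add_div_mul_div_ne_zero_iff hq'

/-- determinant of the fundamental matrix of the linearized system.
`Y_σ(z) = [[f₁,f₂,f₃,f₄],[g₁,g₂,g₃,g₄],[f₁',…],[g₁',…]]` is formed from a solution basis of
`q z f'' + (1+σ) f' + d₁ f + d₂ g = 0`, `q z g'' + k f' + (q+σ) g' + d₃ g = 0`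
with leading behaviors `(1, kq/σ)`, `(0, 1+σ/q)`, `(-z)^{-(k²+σ)/q}(1, 1/k)`,
`(-z)^{-σ/q}(0,1)` at `z = 0`.  Then
`det Y_σ(z) = (1+σ/q)((k²+σ)/q)(σ/q)(-z)^{-(k²+2σ)/q-2}` on `(-1,0)`; in particular `Y_σ(z)`
is invertible iff `σ ∉ {-q, -k², 0}`. -/
theorem stmt_9 (k q : ℝ) (σ d₁ d₂ d₃ : ℂ) (hk : k ≠ 0) (hq : q = 1 - k^2) (hq0 : 0 < q)
    (f g f' g' f'' g'' : Fin 4 → ℝ → ℂ)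
    (hdf : ∀ i, ∀ z ∈ Set.Ioo (-1:ℝ) 0, HasDerivAt (f i) (f' i z) z)
    (hdf' : ∀ i, ∀ z ∈ Set.Ioo (-1:ℝ) 0, HasDerivAt (f' i) (f'' i z) z)
    (hdg : ∀ i, ∀ z ∈ Set.Ioo (-1:ℝ) 0, HasDerivAt (g i) (g' i z) z)
    (hdg' : ∀ i, ∀ z ∈ Set.Ioo (-1:ℝ) 0, HasDerivAt (g' i) (g'' i z) z)
    (hode1 : ∀ i, ∀ z ∈ Set.Ioo (-1:ℝ) 0,
      (q : ℂ) * z * f'' i z + (1 + σ) * f' i z + d₁ * f i z + d₂ * g i z = 0)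
    (hode2 : ∀ i, ∀ z ∈ Set.Ioo (-1:ℝ) 0,
      (q : ℂ) * z * g'' i z + (k : ℂ) * f' i z + ((q : ℂ) + σ) * g' i z + d₃ * g i z = 0)
    -- leading-order behavior of the first column `(1, kq/σ) + O(z)`:
    (h1f : Tendsto (f 0) (nhdsWithin 0 (Set.Iio 0)) (nhds 1))
    (h1g : Tendsto (g 0) (nhdsWithin 0 (Set.Iio 0)) (nhds ((k : ℂ) * q / σ)))
    (h1f' : ∃ c : ℂ, Tendsto (f' 0) (nhdsWithin 0 (Set.Iio 0)) (nhds c))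
    (h1g' : ∃ c : ℂ, Tendsto (g' 0) (nhdsWithin 0 (Set.Iio 0)) (nhds c))
    -- leading-order behavior of the second column `(0, 1+σ/q) + O(z)`:
    (h2f : Tendsto (f 1) (nhdsWithin 0 (Set.Iio 0)) (nhds 0))
    (h2g : Tendsto (g 1) (nhdsWithin 0 (Set.Iio 0)) (nhds (1 + σ / (q : ℂ))))
    (h2f' : ∃ c : ℂ, Tendsto (f' 1) (nhdsWithin 0 (Set.Iio 0)) (nhds c))
    (h2g' : ∃ c : ℂ, Tendsto (g' 1) (nhdsWithin 0 (Set.Iio 0)) (nhds c))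
    -- leading-order behavior of the third column `(-z)^{-μ}(1, 1/k) + …`, `μ = (k²+σ)/q`:
    (h3f : Tendsto (fun z : ℝ => ((-z : ℝ) : ℂ) ^ (((k : ℂ)^2 + σ) / (q : ℂ)) * f 2 z)
      (nhdsWithin 0 (Set.Iio 0)) (nhds 1))
    (h3g : Tendsto (fun z : ℝ => ((-z : ℝ) : ℂ) ^ (((k : ℂ)^2 + σ) / (q : ℂ)) * g 2 z)
      (nhdsWithin 0 (Set.Iio 0)) (nhds (1 / (k : ℂ))))
    (h3f' : Tendsto (fun z : ℝ => ((-z : ℝ) : ℂ) ^ (((k : ℂ)^2 + σ) / (q : ℂ) + 1) * f' 2 z)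
      (nhdsWithin 0 (Set.Iio 0)) (nhds (((k : ℂ)^2 + σ) / (q : ℂ))))
    (h3g' : Tendsto (fun z : ℝ => ((-z : ℝ) : ℂ) ^ (((k : ℂ)^2 + σ) / (q : ℂ) + 1) * g' 2 z)
      (nhdsWithin 0 (Set.Iio 0)) (nhds (((k : ℂ)^2 + σ) / ((q : ℂ) * (k : ℂ)))))
    -- leading-order behavior of the fourth column `(-z)^{-ν}(0, 1) + …`, `ν = σ/q`:
    (h4f : Tendsto (fun z : ℝ => ((-z : ℝ) : ℂ) ^ (σ / (q : ℂ)) * f 3 z)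
      (nhdsWithin 0 (Set.Iio 0)) (nhds 0))
    (h4g : Tendsto (fun z : ℝ => ((-z : ℝ) : ℂ) ^ (σ / (q : ℂ)) * g 3 z)
      (nhdsWithin 0 (Set.Iio 0)) (nhds 1))
    (h4f' : Tendsto (fun z : ℝ => ((-z : ℝ) : ℂ) ^ (σ / (q : ℂ) + 1) * f' 3 z)
      (nhdsWithin 0 (Set.Iio 0)) (nhds 0))
    (h4g' : Tendsto (fun z : ℝ => ((-z : ℝ) : ℂ) ^ (σ / (q : ℂ) + 1) * g' 3 z)
      (nhdsWithin 0 (Set.Iio 0)) (nhds (σ / (q : ℂ)))) :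
    ∀ z ∈ Set.Ioo (-1:ℝ) 0,
      (Matrix.of fun i j : Fin 4 => ![f j z, g j z, f' j z, g' j z] i).det
        = (1 + σ / (q : ℂ)) * (((k : ℂ)^2 + σ) / (q : ℂ)) * (σ / (q : ℂ)) *
            ((-z : ℝ) : ℂ) ^ (-(((k : ℂ)^2 + 2*σ) / (q : ℂ)) - 2) ∧
      (IsUnit (Matrix.of fun i j : Fin 4 => ![f j z, g j z, f' j z, g' j z] i) ↔
        (σ ≠ -(q : ℂ) ∧ σ ≠ -((k : ℂ)^2) ∧ σ ≠ 0)) :=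
  stmt_9_general k q σ d₁ d₂ d₃ hq hq0 f g f' g' f'' g'' hdf hdf' hdg hdg' hode1 hode2 h1f h1g h1f'
    h1g' h2f h2g h2f' h2g' h3f h3g h3f' h3g' h4f h4g h4f' h4g'
end

section
/- Let q = 1-k² with 0 < k < 1, and σ ∈ ℂ with Re σ > -q. Let V : [-1,0] → ℂ be continuous with |V(z)| ≤ M. Define the kernel P(z,z') = (1 - ((-z')/(-z))^{σ/q}) V(z')/σ for -1 ≤ z ≤ z' < 0. Then |P(z,z')| ≤ (2M/|σ|)(1 + ((-z')/(-z))^{Re σ/q}) and the Volterra series ψ(z) = 1 + Σ_{n≥1} ∫_z^0 ∫_{z₁}^0 ⋯ ∫_{z_{n-1}}^0 P(z,z₁) P(z₁,z₂) ⋯ P(z_{n-1}, z_n) dz_n ⋯ dz₁ converges absolutely for every z ∈ [-1,0), and the resulting function ψ satisfies ψ(z) → 1 as z → 0⁻. -/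
/-! With `α = Re σ / q > -1`, integrating the kernel bound against `(-t)^n` over `[z, 0]` gives
`(-z)^(n+1) (1/(n+1) + 1/(n+1+α))`, which is at most a fixed constant times `(-z)^(n+1)/(n+1)`.
By induction `‖Q n z‖ ≤ (A (-z))^n / n!`, so the series is dominated by the exponential series
and `‖ψ z - 1‖ ≤ exp (A (-z)) - 1 → 0`; the condition `Re σ > -q` is exactly what makes
`(-t)^(n+α)` integrable at `0`. -/

open Filter MeasureTheory Nat

lemma norm_one_sub_ofReal_cpow_le {r : ℝ} (hr : 0 < r) (s : ℂ) :
    ‖1 - (r : ℂ) ^ s‖ ≤ 1 + r ^ s.re := by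
  simpa [Complex.norm_cpow_eq_rpow_re_of_pos hr] using norm_sub_le (1 : ℂ) ((r : ℂ) ^ s)

lemma intervalIntegrable_neg_rpow (z : ℝ) {β : ℝ} (hβ : -1 < β) :
    IntervalIntegrable (fun t => (-t) ^ β) volume z 0 := by
  simpa using (IntervalIntegrable.iff_comp_neg (f := fun t : ℝ => t ^ β)).mp
    (intervalIntegral.intervalIntegrable_rpow' (a := -z) (b := -0) hβ)

lemma integral_neg_rpow (z : ℝ) {β : ℝ} (hβ : -1 < β) :
    ∫ t in z..0, (-t) ^ β = (-z) ^ (β + 1) / (β + 1) := by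
  rw [intervalIntegral.integral_comp_neg (fun t => t ^ β), neg_zero,
    integral_rpow (Or.inl hβ), Real.zero_rpow (by linarith), sub_zero]

lemma one_add_div_rpow_mul_rpow {z α β : ℝ} (hz : z < 0) {t : ℝ} (ht : t < 0) :
    (1 + ((-t) / (-z)) ^ α) * (-t) ^ β = (-t) ^ β + (-z) ^ (-α) * (-t) ^ (β + α) := by
  rw [Real.div_rpow (by linarith) (by linarith), Real.rpow_neg (by linarith),
    Real.rpow_add (by linarith)]
  ring

lemma integral_neg_rpow_add_mul_neg_rpow {z α β : ℝ} (hz : z < 0) (hβ : -1 < β)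
    (hβα : -1 < β + α) :
    ∫ t in z..0, ((-t) ^ β + (-z) ^ (-α) * (-t) ^ (β + α)) =
      (-z) ^ (β + 1) * (1 / (β + 1) + 1 / (β + α + 1)) := by
  rw [intervalIntegral.integral_add (intervalIntegrable_neg_rpow z hβ)
      ((intervalIntegrable_neg_rpow z hβα).const_mul _),
    intervalIntegral.integral_const_mul, integral_neg_rpow z hβ, integral_neg_rpow z hβα,
    mul_div_assoc', ← Real.rpow_add (by linarith)]
  ring_nf

lemma one_div_add_one_div_le {α : ℝ} (hα : -1 < α) (n : ℕ) :
    1 / ((n : ℝ) + 1) + 1 / ((n : ℝ) + α + 1) ≤ (1 + max 1 (1 + α)⁻¹) / (n + 1) := by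
  have hn : (0 : ℝ) ≤ n := n.cast_nonneg
  suffices 1 / ((n : ℝ) + α + 1) ≤ max 1 (1 + α)⁻¹ / (n + 1) by rw [add_div]; linarith
  rw [div_le_div_iff₀ (by linarith) (by linarith), one_mul]
  rcases le_or_gt 0 α with h | h
  · nlinarith [le_max_left 1 (1 + α)⁻¹]
  · calc (n : ℝ) + 1 ≤ (1 + α)⁻¹ * (n + α + 1) := by
          rw [inv_mul_eq_div, le_div_iff₀ (by linarith)]; nlinarith
      _ ≤ _ := mul_le_mul_of_nonneg_right (le_max_right _ _) (by linarith)

lemma norm_integral_mul_le_of_kernel_le {P f : ℝ → ℂ} {z α B K : ℝ} {n : ℕ} (hz : z < 0)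
    (hα : -1 < α) (hP : ∀ t, z ≤ t → t < 0 → ‖P t‖ ≤ B * (1 + ((-t) / (-z)) ^ α))
    (hf : ∀ t, z ≤ t → t < 0 → ‖f t‖ ≤ K * (-t) ^ n) :
    ‖∫ t in z..0, P t * f t‖ ≤
      B * K * (-z) ^ (n + 1) * (1 / ((n : ℝ) + 1) + 1 / ((n : ℝ) + α + 1)) := by
  have hn : (0 : ℝ) ≤ n := n.cast_nonneg
  have hβ : -1 < (n : ℝ) := by linarith
  have hβα : -1 < (n : ℝ) + α := by linarith
  -- `Real.rpow_add` needs a positive base, so the endpoint `t = 0` is discarded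
  have hne : ∀ᵐ t : ℝ, t ≠ 0 := by simp [ae_iff]
  calc ‖∫ t in z..0, P t * f t‖
      ≤ ∫ t in z..0, B * K * ((-t) ^ (n : ℝ) + (-z) ^ (-α) * (-t) ^ ((n : ℝ) + α)) := by
        refine intervalIntegral.norm_integral_le_of_norm_le hz.le ?_
          (((intervalIntegrable_neg_rpow z hβ).add
            ((intervalIntegrable_neg_rpow z hβα).const_mul _)).const_mul _)
        filter_upwards [hne] with t ht0 ht
        have ht' : t < 0 := lt_of_le_of_ne ht.2 ht0
        calc ‖P t * f t‖ ≤ B * (1 + ((-t) / (-z)) ^ α) * (K * (-t) ^ n) := by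
              rw [norm_mul]
              exact mul_le_mul (hP t ht.1.le ht') (hf t ht.1.le ht') (norm_nonneg _)
                ((norm_nonneg _).trans (hP t ht.1.le ht'))
          _ = _ := by
              rw [← Real.rpow_natCast, mul_mul_mul_comm, one_add_div_rpow_mul_rpow hz ht']
    _ = _ := by
        rw [intervalIntegral.integral_const_mul, integral_neg_rpow_add_mul_neg_rpow hz hβ hβα,
          ← Real.rpow_natCast]
        push_cast
        ring

/-- By `one_div_add_one_div_le`, one Volterra step multiplies the bound `K (-z)^n` by at most
`volterraConst B α * (-z) / (n + 1)`. -/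
noncomputable def volterraConst (B α : ℝ) : ℝ := B * (1 + max 1 (1 + α)⁻¹)

lemma norm_volterra_iterate_le {a α B : ℝ} {P : ℝ → ℝ → ℂ} {Q : ℕ → ℝ → ℂ}
    (hα : -1 < α) (hB : 0 ≤ B)
    (hP : ∀ z t, a ≤ z → z ≤ t → t < 0 → ‖P z t‖ ≤ B * (1 + ((-t) / (-z)) ^ α))
    (hQ0 : ∀ z, Q 0 z = 1) (hQs : ∀ n z, Q (n + 1) z = ∫ t in z..0, P z t * Q n t)
    (n : ℕ) {z : ℝ} (hz : z ∈ Set.Icc a 0) :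
    ‖Q n z‖ ≤ (volterraConst B α * -z) ^ n / n ! := by
  induction n generalizing z with
  | zero => simp [hQ0]
  | succ n ih =>
    rw [hQs]
    rcases hz.2.eq_or_lt with rfl | hz0
    · simp
    calc ‖∫ t in z..0, P z t * Q n t‖
        ≤ B * (volterraConst B α ^ n / n !) * (-z) ^ (n + 1) *
            (1 / ((n : ℝ) + 1) + 1 / ((n : ℝ) + α + 1)) := by
          refine norm_integral_mul_le_of_kernel_le hz0 hα (hP z · hz.1) fun t hzt ht => ?_
          simpa only [mul_pow, mul_div_right_comm] using ih ⟨hz.1.trans hzt, ht.le⟩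
      _ ≤ B * (volterraConst B α ^ n / n !) * (-z) ^ (n + 1) *
            ((1 + max 1 (1 + α)⁻¹) / (n + 1)) := by
          refine mul_le_mul_of_nonneg_left (one_div_add_one_div_le hα n) ?_
          have : 0 ≤ volterraConst B α := mul_nonneg hB (by positivity)
          exact mul_nonneg (by positivity) (pow_nonneg (by linarith) _)
      _ = (volterraConst B α * -z) ^ (n + 1) / (n + 1)! := by
          rw [mul_pow, factorial_succ, cast_mul, cast_succ, volterraConst]
          field_simp
          ring

lemma norm_tsum_sub_one_le_exp_sub_one {Q : ℕ → ℂ} {x : ℝ} (hQ0 : Q 0 = 1)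
    (hQ : ∀ n, ‖Q n‖ ≤ x ^ n / n !) : ‖∑' n, Q n - 1‖ ≤ Real.exp x - 1 := by
  have hexp : HasSum (fun n => x ^ (n + 1) / (n + 1)!) (Real.exp x - 1) := by
    simpa [Real.exp_eq_exp_ℝ] using
      (hasSum_nat_add_iff' 1).mpr (NormedSpace.expSeries_div_hasSum_exp x)
  rw [(Summable.of_norm_bounded (Real.summable_pow_div_factorial x) hQ).tsum_eq_zero_add, hQ0,
    add_sub_cancel_left]
  exact tsum_of_norm_bounded hexp fun n => hQ (n + 1)

theorem stmt_13_general (k M q : ℝ) (σ : ℂ) (hk : 0 < k) (hk1 : k < 1)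
    (hq : q = 1 - k^2) (hσ : -q < σ.re) (hM : 0 ≤ M)
    (V : ℝ → ℂ)
    (hVb : ∀ z ∈ Set.Icc (-1:ℝ) 0, ‖V z‖ ≤ M)
    (P : ℝ → ℝ → ℂ)
    (hP : ∀ z z' : ℝ,
      P z z' = (1 - (((-z' : ℝ) : ℂ) / ((-z : ℝ) : ℂ)) ^ (σ / (q : ℂ))) * V z' / σ)
    (Q : ℕ → ℝ → ℂ) (hQ0 : ∀ z, Q 0 z = 1)
    (hQs : ∀ n z, Q (n+1) z = ∫ z' in z..0, P z z' * Q n z') :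
    (∀ z z' : ℝ, -1 ≤ z → z ≤ z' → z' < 0 →
      ‖P z z'‖ ≤ (2 * M / ‖σ‖) * (1 + ((-z') / (-z)) ^ (σ.re / q))) ∧
    (∀ z ∈ Set.Ico (-1:ℝ) 0, Summable fun n => ‖Q n z‖) ∧
    Tendsto (fun z => ∑' n, Q n z) (nhdsWithin 0 (Set.Iio 0)) (nhds 1) := by
  have hq0 : 0 < q := by nlinarith
  have hα : -1 < σ.re / q := by rw [lt_div_iff₀ hq0]; linarith
  have hkernel : ∀ z z' : ℝ, -1 ≤ z → z ≤ z' → z' < 0 →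
      ‖P z z'‖ ≤ (2 * M / ‖σ‖) * (1 + ((-z') / (-z)) ^ (σ.re / q)) := by
    intro z z' hz hzz' hz'
    have hr : 0 < (-z') / (-z) := div_pos (by linarith) (by linarith)
    have hr_rpow : 0 ≤ 1 + ((-z') / (-z)) ^ (σ / q).re :=
      add_nonneg zero_le_one (Real.rpow_nonneg hr.le _)
    rw [hP, ← Complex.ofReal_div, norm_div, norm_mul, ← Complex.div_ofReal_re]
    calc ‖1 - (((-z') / (-z) : ℝ) : ℂ) ^ (σ / q)‖ * ‖V z'‖ / ‖σ‖
        ≤ (1 + ((-z') / (-z)) ^ (σ / q).re) * M / ‖σ‖ := by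
          gcongr
          · exact norm_one_sub_ofReal_cpow_le hr _
          · exact hVb z' ⟨by linarith, hz'.le⟩
      _ = M / ‖σ‖ * (1 + ((-z') / (-z)) ^ (σ / q).re) := by ring
      _ ≤ _ := by gcongr; linarith
  have hQ := norm_volterra_iterate_le hα (by positivity) hkernel hQ0 hQs
  set A := volterraConst (2 * M / ‖σ‖) (σ.re / q)
  refine ⟨hkernel, fun z hz => ?_, ?_⟩
  · exact (Real.summable_pow_div_factorial (A * -z)).of_nonneg_of_le (fun _ => norm_nonneg _)
      fun n => hQ n ⟨hz.1, hz.2.le⟩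
  have hexp : Tendsto (fun z => Real.exp (A * -z) - 1) (nhdsWithin 0 (Set.Iio 0)) (nhds 0) := by
    simpa using ((by fun_prop : Continuous fun z => Real.exp (A * -z) - 1).tendsto 0).mono_left
      nhdsWithin_le_nhds
  rw [← tendsto_sub_nhds_zero_iff]
  refine squeeze_zero_norm' ?_ hexp
  filter_upwards [Ioo_mem_nhdsLT (show (-1 : ℝ) < 0 by norm_num)] with z hz
  exact norm_tsum_sub_one_le_exp_sub_one (hQ0 z) fun n => hQ n ⟨hz.1.le, hz.2.le⟩

/-- Volterra construction of the outgoing solution for the single linear wave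
equation. With `q = 1-k²`, `Re σ > -q`, `|V| ≤ M`, and kernel
`P(z,z') = (1 - ((-z')/(-z))^{σ/q}) V(z')/σ`, the kernel bound
`‖P(z,z')‖ ≤ (2M/|σ|)(1 + ((-z')/(-z))^{Re σ/q})` holds for `-1 ≤ z ≤ z' < 0`, the Volterra
series `Σ Q_n` converges absolutely for `z ∈ [-1,0)`, and `ψ(z) = Σ Q_n(z) → 1` as `z → 0⁻`. -/
theorem stmt_13 (k M q : ℝ) (σ : ℂ) (hk : 0 < k) (hk1 : k < 1)
    (hq : q = 1 - k^2) (hσ : -q < σ.re) (hσ0 : σ ≠ 0) (hM : 0 ≤ M)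
    (V : ℝ → ℂ) (hV : ContinuousOn V (Set.Icc (-1:ℝ) 0))
    (hVb : ∀ z ∈ Set.Icc (-1:ℝ) 0, ‖V z‖ ≤ M)
    (P : ℝ → ℝ → ℂ)
    (hP : ∀ z z' : ℝ,
      P z z' = (1 - (((-z' : ℝ) : ℂ) / ((-z : ℝ) : ℂ)) ^ (σ / (q : ℂ))) * V z' / σ)
    (Q : ℕ → ℝ → ℂ) (hQ0 : ∀ z, Q 0 z = 1)
    (hQs : ∀ n z, Q (n+1) z = ∫ z' in z..0, P z z' * Q n z') :
    (∀ z z' : ℝ, -1 ≤ z → z ≤ z' → z' < 0 →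
      ‖P z z'‖ ≤ (2 * M / ‖σ‖) * (1 + ((-z') / (-z)) ^ (σ.re / q))) ∧
    (∀ z ∈ Set.Ico (-1:ℝ) 0, Summable fun n => ‖Q n z‖) ∧
    Tendsto (fun z => ∑' n, Q n z) (nhdsWithin 0 (Set.Iio 0)) (nhds 1) :=
  stmt_13_general k M q σ hk hk1 hq hσ hM V hVb P hP Q hQ0 hQs
end

section
/- Let k, q = 1-k², λ₀ ∈ ℝ, and consider the coupled system of algebraic equations in unknowns a₁, A₁ given σ ∈ ℂ with σ ∉ {k², -q}: (1+σ) a₁ = -(k²σ + k²(2+k²)) λ₀ (σ+1)/(σ-k²) a₀ - (2kλ₀(1+k²)/(σ-k²))(σ+1) A₀ and (q+σ) A₁ + k a₁ = k² λ₀ A₀. If (a₀, A₀) = (1, k q/σ) with σ ≠ 0, then a₁ = -k²λ₀(σ+2+k²)/(σ-k²) - 2k²λ₀(1+k²)q/((σ-k²)σ) and A₁ = λ₀ k³ (σ + k² + 2)/((σ-k²)σ), and both are holomorphic in σ on the strip {-1-β ≤ Re σ ≤ -β} for any β ∈ (0,1/2) (with k small enough that k² < β); in particular the factor (1+σ) cancels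 so that a₁, A₁ have no pole at σ = -1. -/
/-! With `(a₀, A₀) = (1, kq/σ)` every term on the right of the first equation carries the factor
`σ + 1`, so `a₁` is read off by cancelling `1 + σ` against it, and substituting this `a₁` into the
second equation leaves a right-hand side divisible by `q + σ`. The resulting `a₁`, `A₁` only have
poles at `σ = 0` and `σ = k²`, both in the closed right half-plane, while the strip lies in the open
left half-plane. -/

open Complex

section Algebra

variable {K : Type*} [Field K]

theorem eq_and_eq_of_triangular {a b c x x' y y' : K} (ha : a ≠ 0) (hb : b ≠ 0)
    (hx : a * x = a * x') (hy : b * y + c * x = b * y' + c * x') : x = x' ∧ y = y' := by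
  obtain rfl : x = x' := mul_left_cancel₀ ha hx
  exact ⟨rfl, mul_left_cancel₀ hb (add_right_cancel hy)⟩

def coeffa₁ (k l q σ : K) : K :=
  -k ^ 2 * l * (σ + 2 + k ^ 2) / (σ - k ^ 2) - 2 * k ^ 2 * l * (1 + k ^ 2) * q / ((σ - k ^ 2) * σ)

def coeffA₁ (k l σ : K) : K :=
  l * k ^ 3 * (σ + k ^ 2 + 2) / ((σ - k ^ 2) * σ)

theorem one_add_mul_coeffa₁ {k l q σ : K} (hσ : σ ≠ 0) (hσk : σ - k ^ 2 ≠ 0) :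
    (1 + σ) * coeffa₁ k l q σ =
      -(k ^ 2 * σ + k ^ 2 * (2 + k ^ 2)) * l * (σ + 1) / (σ - k ^ 2) * 1
        - (2 * k * l * (1 + k ^ 2) / (σ - k ^ 2)) * (σ + 1) * (k * q / σ) := by
  unfold coeffa₁
  field_simp
  ring

theorem add_mul_coeffA₁_add_mul_coeffa₁ {k l q σ : K} (hq : q = 1 - k ^ 2) (hσ : σ ≠ 0)
    (hσk : σ - k ^ 2 ≠ 0) :
    (q + σ) * coeffA₁ k l σ + k * coeffa₁ k l q σ = k ^ 2 * l * (k * q / σ) := by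
  subst hq
  unfold coeffA₁ coeffa₁
  field_simp
  ring

end Algebra

theorem sub_ofReal_ne_zero_of_re_lt {σ : ℂ} {c : ℝ} (h : σ.re < c) : σ - c ≠ 0 := by
  rw [sub_ne_zero]
  rintro rfl
  simp at h

theorem ne_zero_of_re_neg {σ : ℂ} (h : σ.re < 0) : σ ≠ 0 := by
  simpa using sub_ofReal_ne_zero_of_re_lt h

theorem sub_ofReal_sq_ne_zero_of_re_neg {σ : ℂ} (k : ℝ) (h : σ.re < 0) : σ - (k : ℂ) ^ 2 ≠ 0 := by
  simpa using sub_ofReal_ne_zero_of_re_lt (h.trans_le (sq_nonneg k))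

theorem differentiableOn_coeffa₁ (k : ℝ) (l q : ℂ) :
    DifferentiableOn ℂ (coeffa₁ (k : ℂ) l q) {σ | σ.re < 0} := by
  unfold coeffa₁
  fun_prop (disch := first
    | exact fun σ hσ => sub_ofReal_sq_ne_zero_of_re_neg k hσ
    | exact fun σ hσ => mul_ne_zero (sub_ofReal_sq_ne_zero_of_re_neg k hσ) (ne_zero_of_re_neg hσ))

theorem differentiableOn_coeffA₁ (k : ℝ) (l : ℂ) :
    DifferentiableOn ℂ (coeffA₁ (k : ℂ) l) {σ | σ.re < 0} := by
  unfold coeffA₁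
  fun_prop (disch :=
    exact fun σ hσ => mul_ne_zero (sub_ofReal_sq_ne_zero_of_re_neg k hσ) (ne_zero_of_re_neg hσ))

theorem stmt_14_general (k l₀ β q : ℝ) (hβ : β ∈ Set.Ioo (0:ℝ) (1/2))
    (hq : q = 1 - k^2) :
    let a1F : ℂ → ℂ := fun σ =>
      -(k : ℂ)^2 * (l₀ : ℂ) * (σ + 2 + (k : ℂ)^2) / (σ - (k : ℂ)^2)
        - 2 * (k : ℂ)^2 * (l₀ : ℂ) * (1 + (k : ℂ)^2) * (q : ℂ) / ((σ - (k : ℂ)^2) * σ)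
    let A1F : ℂ → ℂ := fun σ =>
      (l₀ : ℂ) * (k : ℂ)^3 * (σ + (k : ℂ)^2 + 2) / ((σ - (k : ℂ)^2) * σ)
    (∀ σ : ℂ, σ ≠ 0 → σ ≠ (k : ℂ)^2 → σ ≠ -(q : ℂ) →
      ((1 + σ) * a1F σ =
          -((k : ℂ)^2 * σ + (k : ℂ)^2 * (2 + (k : ℂ)^2)) * (l₀ : ℂ) * (σ + 1) / (σ - (k : ℂ)^2) * 1
            - (2 * (k : ℂ) * (l₀ : ℂ) * (1 + (k : ℂ)^2) / (σ - (k : ℂ)^2)) * (σ + 1)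
                * ((k : ℂ) * (q : ℂ) / σ) ∧
        ((q : ℂ) + σ) * A1F σ + (k : ℂ) * a1F σ
          = (k : ℂ)^2 * (l₀ : ℂ) * ((k : ℂ) * (q : ℂ) / σ))) ∧
    (∀ σ : ℂ, σ ≠ 0 → σ ≠ (k : ℂ)^2 → σ ≠ -(q : ℂ) → 1 + σ ≠ 0 →
      ∀ a₁ A₁ : ℂ,
        (1 + σ) * a₁ =
          -((k : ℂ)^2 * σ + (k : ℂ)^2 * (2 + (k : ℂ)^2)) * (l₀ : ℂ) * (σ + 1) / (σ - (k : ℂ)^2) * 1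
            - (2 * (k : ℂ) * (l₀ : ℂ) * (1 + (k : ℂ)^2) / (σ - (k : ℂ)^2)) * (σ + 1)
                * ((k : ℂ) * (q : ℂ) / σ) →
        ((q : ℂ) + σ) * A₁ + (k : ℂ) * a₁
          = (k : ℂ)^2 * (l₀ : ℂ) * ((k : ℂ) * (q : ℂ) / σ) →
        a₁ = a1F σ ∧ A₁ = A1F σ) ∧
    DifferentiableOn ℂ a1F {σ : ℂ | -1 - β ≤ σ.re ∧ σ.re ≤ -β} ∧
    DifferentiableOn ℂ A1F {σ : ℂ | -1 - β ≤ σ.re ∧ σ.re ≤ -β} := by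
  intro a1F A1F
  have hqC : (q : ℂ) = 1 - (k : ℂ) ^ 2 := by rw [hq]; push_cast; rfl
  have strip_subset : {σ : ℂ | -1 - β ≤ σ.re ∧ σ.re ≤ -β} ⊆ {σ | σ.re < 0} :=
    fun σ hσ => hσ.2.trans_lt (neg_neg_of_pos hβ.1)
  refine ⟨fun σ hσ hσk _ => ⟨one_add_mul_coeffa₁ hσ (sub_ne_zero.mpr hσk),
      add_mul_coeffA₁_add_mul_coeffa₁ hqC hσ (sub_ne_zero.mpr hσk)⟩, ?_,
    (differentiableOn_coeffa₁ k l₀ q).mono strip_subset,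
    (differentiableOn_coeffA₁ k l₀).mono strip_subset⟩
  intro σ hσ hσk hσq h1σ a₁ A₁ e₁ e₂
  have hqσ : (q : ℂ) + σ ≠ 0 := fun h => hσq (eq_neg_of_add_eq_zero_right h)
  exact eq_and_eq_of_triangular h1σ hqσ
    (e₁.trans (one_add_mul_coeffa₁ hσ (sub_ne_zero.mpr hσk)).symm)
    (e₂.trans (add_mul_coeffA₁_add_mul_coeffa₁ hqC hσ (sub_ne_zero.mpr hσk)).symm)

/-- key cancellation: with `q = 1-k²`, the explicit values
`a₁ = -k²l₀(σ+2+k²)/(σ-k²) - 2k²l₀(1+k²)q/((σ-k²)σ)` and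
`A₁ = l₀k³(σ+k²+2)/((σ-k²)σ)` solve the coupled algebraic system
`(1+σ)a₁ = -(k²σ+k²(2+k²))l₀(σ+1)/(σ-k²)·a₀ - (2kl₀(1+k²)/(σ-k²))(σ+1)·A₀`,
`(q+σ)A₁ + k a₁ = k²l₀ A₀` with `(a₀,A₀) = (1, kq/σ)`; they are the unique solution when
`1+σ ≠ 0`; and both are holomorphic in `σ` on the strip `{-1-β ≤ Re σ ≤ -β}` (with
`k² < β`, `β ∈ (0,1/2)`), so in particular the factor `(1+σ)` cancels and there is no pole
at `σ = -1`. -/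
theorem stmt_14 (k l₀ β q : ℝ) (hk : k ≠ 0) (hβ : β ∈ Set.Ioo (0:ℝ) (1/2))
    (hkβ : k^2 < β) (hq : q = 1 - k^2) :
    let a1F : ℂ → ℂ := fun σ =>
      -(k : ℂ)^2 * (l₀ : ℂ) * (σ + 2 + (k : ℂ)^2) / (σ - (k : ℂ)^2)
        - 2 * (k : ℂ)^2 * (l₀ : ℂ) * (1 + (k : ℂ)^2) * (q : ℂ) / ((σ - (k : ℂ)^2) * σ)
    let A1F : ℂ → ℂ := fun σ =>
      (l₀ : ℂ) * (k : ℂ)^3 * (σ + (k : ℂ)^2 + 2) / ((σ - (k : ℂ)^2) * σ)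
    (∀ σ : ℂ, σ ≠ 0 → σ ≠ (k : ℂ)^2 → σ ≠ -(q : ℂ) →
      ((1 + σ) * a1F σ =
          -((k : ℂ)^2 * σ + (k : ℂ)^2 * (2 + (k : ℂ)^2)) * (l₀ : ℂ) * (σ + 1) / (σ - (k : ℂ)^2) * 1
            - (2 * (k : ℂ) * (l₀ : ℂ) * (1 + (k : ℂ)^2) / (σ - (k : ℂ)^2)) * (σ + 1)
                * ((k : ℂ) * (q : ℂ) / σ) ∧
        ((q : ℂ) + σ) * A1F σ + (k : ℂ) * a1F σ
          = (k : ℂ)^2 * (l₀ : ℂ) * ((k : ℂ) * (q : ℂ) / σ))) ∧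
    (∀ σ : ℂ, σ ≠ 0 → σ ≠ (k : ℂ)^2 → σ ≠ -(q : ℂ) → 1 + σ ≠ 0 →
      ∀ a₁ A₁ : ℂ,
        (1 + σ) * a₁ =
          -((k : ℂ)^2 * σ + (k : ℂ)^2 * (2 + (k : ℂ)^2)) * (l₀ : ℂ) * (σ + 1) / (σ - (k : ℂ)^2) * 1
            - (2 * (k : ℂ) * (l₀ : ℂ) * (1 + (k : ℂ)^2) / (σ - (k : ℂ)^2)) * (σ + 1)
                * ((k : ℂ) * (q : ℂ) / σ) →
        ((q : ℂ) + σ) * A₁ + (k : ℂ) * a₁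
          = (k : ℂ)^2 * (l₀ : ℂ) * ((k : ℂ) * (q : ℂ) / σ) →
        a₁ = a1F σ ∧ A₁ = A1F σ) ∧
    DifferentiableOn ℂ a1F {σ : ℂ | -1 - β ≤ σ.re ∧ σ.re ≤ -β} ∧
    DifferentiableOn ℂ A1F {σ : ℂ | -1 - β ≤ σ.re ∧ σ.re ≤ -β} :=
  stmt_14_general k l₀ β q hβ hq
end
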